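/- arXiv:2602.18081 — 6 statements merged into one kernel-verified Lean document; each statement's English description precedes it below -/
import Mathlib

section
/- Let S(n) be the symmetric simple random walk (P(X_1=1)=P(X_1=-1)=1/2, X_k i.i.d.) and τ_1=inf{n≥1 : 1+S(n)≤0}. Then for every integer k≥0, P(τ_1 = 2k+1) = (1/(k+1))·C(2k,k)·2^{-2k-1}, where C(2k,k) is the central binomial coefficient. -/
open MeasureTheory ProbabilityTheory Filter

namespace Stmt1

variable {Ω : Type*}

/-- Partial sums of the increments: `S n = X 0 + ⋯ + X (n-1)`. -/
def S (X : ℕ → Ω → ℝ) (n : ℕ) (ω : Ω) : ℝ := ∑ k ∈ Finset.range n, X k ω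

/-- The event `τ_x = n`: the first time `k ≥ 1` with `x + S k ≤ 0` equals `n`. -/
def tauEq (X : ℕ → Ω → ℝ) (x : ℝ) (n : ℕ) : Set Ω :=
  {ω | x + S X n ω ≤ 0 ∧ ∀ k, 1 ≤ k → k < n → 0 < x + S X k ω}

/-!
Off a null set every step is `±1`, so the event `τ₁ = 2k+1` is determined by the set of times
`i < 2k+1` at which the walk steps up, and each such set has probability `2^{-(2k+1)}` by
independence. The admissible sets are those whose walk stays `≥ 0` up to time `2k`, is `0` there
and then steps down: a Dyck word of semilength `k` followed by a down-step. There are `catalan k`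
of them, and `(k+1) · catalan k = C(2k,k)`.
-/

open Finset DyckStep

section Walk

-- A `±1` path is encoded by the set of times at which it steps up.
def walk (A : Finset ℕ) (m : ℕ) : ℤ := ∑ i ∈ range m, if i ∈ A then 1 else -1

def IsFirstPassage (n : ℕ) (A : Finset ℕ) : Prop := walk A n < 0 ∧ ∀ m < n, 0 ≤ walk A m

def IsExcursion (n : ℕ) (A : Finset ℕ) : Prop := walk A n = 0 ∧ ∀ m ≤ n, 0 ≤ walk A m

instance (n : ℕ) : DecidablePred (IsFirstPassage n) := fun _ => by
  unfold IsFirstPassage; infer_instance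

instance (n : ℕ) : DecidablePred (IsExcursion n) := fun _ => by
  unfold IsExcursion; infer_instance

variable {A : Finset ℕ} {n : ℕ}

lemma walk_succ (A : Finset ℕ) (m : ℕ) : walk A (m + 1) = walk A m + if m ∈ A then 1 else -1 :=
  sum_range_succ _ _

lemma isFirstPassage_succ_iff : IsFirstPassage (n + 1) A ↔ n ∉ A ∧ IsExcursion n A := by
  unfold IsFirstPassage IsExcursion
  rw [walk_succ]
  constructor
  · rintro ⟨hneg, hnonneg⟩
    have hn := hnonneg n n.lt_succ_self
    by_cases hA : n ∈ A
    · simp only [hA, if_true] at hneg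
      omega
    · simp only [hA, if_false] at hneg
      exact ⟨hA, by omega, fun m hm => hnonneg m (Nat.lt_succ_of_le hm)⟩
  · rintro ⟨hA, hzero, hnonneg⟩
    simp only [hA, if_false, hzero]
    exact ⟨by norm_num, fun m hm => hnonneg m (Nat.le_of_lt_succ hm)⟩

def stepWord (A : Finset ℕ) (n : ℕ) : List DyckStep :=
  (List.range n).map fun i => if i ∈ A then U else D

@[simp]
lemma length_stepWord : (stepWord A n).length = n := by simp [stepWord]

lemma take_stepWord (m : ℕ) : (stepWord A n).take m = stepWord A (min m n) := by
  rw [stepWord, ← List.map_take, List.take_range, stepWord]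

lemma count_U_sub_count_D_stepWord :
    ((stepWord A n).count U : ℤ) - (stepWord A n).count D = walk A n := by
  induction n with
  | zero => simp [stepWord, walk]
  | succ n ih =>
    rw [stepWord, List.range_succ, List.map_append, ← stepWord, walk_succ, ← ih]
    by_cases h : n ∈ A <;> simp [h] <;> ring

lemma isExcursion_iff_count :
    IsExcursion n A ↔ (stepWord A n).count U = (stepWord A n).count D ∧
      ∀ i, ((stepWord A n).take i).count D ≤ ((stepWord A n).take i).count U := by
  have height (m : ℕ) := count_U_sub_count_D_stepWord (A := A) (n := m)
  simp only [IsExcursion, take_stepWord]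
  constructor
  · rintro ⟨hzero, hnonneg⟩
    refine ⟨by have := height n; omega, fun i => ?_⟩
    have := hnonneg (min i n) (min_le_right _ _)
    have := height (min i n)
    omega
  · rintro ⟨hzero, hnonneg⟩
    refine ⟨by have := height n; omega, fun m hm => ?_⟩
    have := hnonneg m
    rw [min_eq_left hm] at this
    have := height m
    omega

def upIndices (l : List DyckStep) : Finset ℕ := (range l.length).filter fun i => l[i]? = some U

lemma stepWord_upIndices (l : List DyckStep) : stepWord (upIndices l) l.length = l := by
  refine List.ext_getElem length_stepWord fun i _ hi => ?_
  rcases (l[i]).dichotomy with h | h <;> simp [stepWord, upIndices, hi, h]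

lemma upIndices_stepWord (hA : A ⊆ range n) : upIndices (stepWord A n) = A := by
  ext i
  by_cases hi : i < n
  · by_cases h : i ∈ A <;> simp [upIndices, stepWord, hi, h]
  · have : i ∉ A := fun h => hi (mem_range.1 (hA h))
    simp [upIndices, hi, this]

def IsExcursion.toDyckWord (h : IsExcursion n A) : DyckWord where
  toList := stepWord A n
  count_U_eq_count_D := (isExcursion_iff_count.1 h).1
  count_D_le_count_U := (isExcursion_iff_count.1 h).2

lemma IsExcursion.two_mul_semilength_toDyckWord (h : IsExcursion n A) :
    2 * h.toDyckWord.semilength = n :=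
  h.toDyckWord.two_mul_semilength_eq_length.trans length_stepWord

theorem card_excursions (k : ℕ) :
    #{A ∈ (range (2 * k)).powerset | IsExcursion (2 * k) A} = catalan k := by
  rw [← DyckWord.card_dyckWord_semilength_eq_catalan, ← card_univ]
  refine card_bij (fun A hA => ⟨(mem_filter.1 hA).2.toDyckWord, ?_⟩) (fun _ _ => mem_univ _)
    (fun A hA B hB hAB => ?_) (fun p _ => ?_)
  · have := (mem_filter.1 hA).2.two_mul_semilength_toDyckWord
    omega
  · have hword := congrArg (upIndices ∘ DyckWord.toList ∘ Subtype.val) hAB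
    simpa [IsExcursion.toDyckWord, upIndices_stepWord (mem_powerset.1 (mem_filter.1 hA).1),
      upIndices_stepWord (mem_powerset.1 (mem_filter.1 hB).1)] using hword
  · obtain ⟨p, hp⟩ := p
    have hlen : p.toList.length = 2 * k := by rw [← p.two_mul_semilength_eq_length, hp]
    have hword : stepWord (upIndices p.toList) (2 * k) = p.toList :=
      hlen ▸ stepWord_upIndices p.toList
    have hexc : IsExcursion (2 * k) (upIndices p.toList) :=
      isExcursion_iff_count.2 (by rw [hword]; exact ⟨p.count_U_eq_count_D, p.count_D_le_count_U⟩)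
    exact ⟨upIndices p.toList, mem_filter.2 ⟨mem_powerset.2 (hlen ▸ filter_subset _ _), hexc⟩,
      Subtype.ext (DyckWord.ext hword)⟩

theorem card_firstPassage (k : ℕ) :
    #{A ∈ (range (2 * k + 1)).powerset | IsFirstPassage (2 * k + 1) A} = catalan k := by
  rw [← card_excursions]
  congr 1
  ext A
  simp only [mem_filter, mem_powerset, isFirstPassage_succ_iff, range_add_one]
  constructor
  · rintro ⟨hsub, hlast, hexc⟩
    exact ⟨(subset_insert_iff_of_notMem hlast).1 hsub, hexc⟩
  · rintro ⟨hsub, hexc⟩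
    exact ⟨hsub.trans (subset_insert _ _), fun h => by simpa using hsub h, hexc⟩

end Walk

section RandomWalk

open scoped ENNReal

variable {X : ℕ → Ω → ℝ} {n : ℕ}

noncomputable def upSteps (X : ℕ → Ω → ℝ) (n : ℕ) (ω : Ω) : Finset ℕ :=
  (range n).filter fun i => X i ω = 1

lemma setOf_upSteps_eq {A : Finset ℕ} (hA : A ⊆ range n) :
    {ω | upSteps X n ω = A} = ⋂ i ∈ range n, X i ⁻¹' (if i ∈ A then {1} else {1}ᶜ) := by
  ext ω
  simp only [Set.mem_ofPred_eq, Set.mem_iInter, Finset.ext_iff, upSteps, mem_filter, mem_range]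
  refine forall_congr' fun i => ?_
  by_cases hi : i ∈ A
  · simp [hi, mem_range.1 (hA hi)]
  · by_cases hn : i < n <;> simp [hi, hn]

lemma S_eq_walk_upSteps {ω : Ω} (hω : ∀ i, X i ω = 1 ∨ X i ω = -1) {m : ℕ} (hm : m ≤ n) :
    S X m ω = walk (upSteps X n ω) m := by
  rw [S, walk]
  push_cast
  refine sum_congr rfl fun i hi => ?_
  have hin : i < n := (mem_range.1 hi).trans_le hm
  rcases hω i with h | h <;> simp [upSteps, h, hin]

variable [MeasurableSpace Ω] {P : Measure Ω}

lemma measurableSet_setOf_upSteps_eq (hmeas : ∀ i, Measurable (X i)) {A : Finset ℕ}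
    (hA : A ⊆ range n) : MeasurableSet {ω | upSteps X n ω = A} := by
  rw [setOf_upSteps_eq hA]
  refine Finset.measurableSet_biInter _ fun i _ => hmeas i ?_
  split_ifs
  exacts [measurableSet_singleton 1, (measurableSet_singleton 1).compl]

lemma measure_upSteps_eq [IsProbabilityMeasure P] (hmeas : ∀ i, Measurable (X i))
    (hindep : iIndepFun X P) {p : ℝ≥0∞} (hlaw : ∀ i, P {ω | X i ω = 1} = p) {A : Finset ℕ}
    (hA : A ⊆ range n) :
    P {ω | upSteps X n ω = A} = p ^ #A * (1 - p) ^ (n - #A) := by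
  have hstep (i : ℕ) : P (X i ⁻¹' if i ∈ A then {1} else {1}ᶜ) = if i ∈ A then p else 1 - p := by
    split_ifs
    · exact hlaw i
    · rw [Set.preimage_compl, prob_compl_eq_one_sub (hmeas i (measurableSet_singleton 1))]
      exact congrArg (1 - ·) (hlaw i)
  rw [setOf_upSteps_eq hA, hindep.measure_inter_preimage_eq_mul _ fun i _ => ?_]
  · simp_rw [hstep]
    rw [prod_ite, prod_const, prod_const, filter_mem_eq_inter, inter_eq_right.2 hA, filter_not,
      filter_mem_eq_inter, inter_eq_right.2 hA, card_sdiff_of_subset hA, card_range]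
  · split_ifs
    exacts [measurableSet_singleton 1, (measurableSet_singleton 1).compl]

lemma measure_upSteps_eq_half_pow [IsProbabilityMeasure P] (hmeas : ∀ i, Measurable (X i))
    (hindep : iIndepFun X P) (hlaw : ∀ i, P {ω | X i ω = 1} = 1 / 2) {A : Finset ℕ}
    (hA : A ⊆ range n) : P {ω | upSteps X n ω = A} = 2⁻¹ ^ n := by
  have hcard : #A ≤ n := (card_le_card hA).trans_eq (card_range n)
  rw [measure_upSteps_eq hmeas hindep hlaw hA, one_div, ENNReal.one_sub_inv_two, ← pow_add,
    Nat.add_sub_cancel' hcard]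

lemma measure_setOf_upSteps (hmeas : ∀ i, Measurable (X i)) (Q : Finset ℕ → Prop)
    [DecidablePred Q] :
    P {ω | Q (upSteps X n ω)} =
      ∑ A ∈ (range n).powerset with Q A, P {ω | upSteps X n ω = A} := by
  have hunion : {ω | Q (upSteps X n ω)} =
      ⋃ A ∈ ({A ∈ (range n).powerset | Q A} : Finset _), {ω | upSteps X n ω = A} := by
    ext ω
    simp [upSteps, filter_subset]
  rw [hunion, measure_biUnion_finset]
  · intro A _ B _ hAB
    exact Set.disjoint_left.2 fun ω hA hB => hAB (hA.symm.trans hB)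
  · intro A hA
    exact measurableSet_setOf_upSteps_eq hmeas (mem_powerset.1 (mem_filter.1 hA).1)

lemma ae_eq_one_or_eq_neg_one [IsProbabilityMeasure P] {Y : Ω → ℝ} (hY : Measurable Y)
    (h1 : P {ω | Y ω = 1} = 1 / 2) (h2 : P {ω | Y ω = -1} = 1 / 2) :
    ∀ᵐ ω ∂P, Y ω = 1 ∨ Y ω = -1 := by
  have hm1 : MeasurableSet {ω | Y ω = 1} := hY (measurableSet_singleton 1)
  have hm2 : MeasurableSet {ω | Y ω = -1} := hY (measurableSet_singleton (-1))
  have hdisj : Disjoint {ω | Y ω = 1} {ω | Y ω = -1} :=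
    Set.disjoint_left.2 fun ω (h1 : Y ω = 1) (h2 : Y ω = -1) => by norm_num [h1] at h2
  refine ae_iff.2 ((prob_compl_eq_zero_iff (hm1.union hm2)).2 ?_)
  rw [measure_union hdisj hm2, h1, h2, ENNReal.add_halves]

lemma tauEq_one_ae_eq [IsProbabilityMeasure P] (hmeas : ∀ i, Measurable (X i))
    (hlaw1 : ∀ i, P {ω | X i ω = 1} = 1 / 2) (hlaw2 : ∀ i, P {ω | X i ω = -1} = 1 / 2) (n : ℕ) :
    tauEq X 1 n =ᵐ[P] {ω | IsFirstPassage n (upSteps X n ω)} := by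
  have hae : ∀ᵐ ω ∂P, ∀ i, X i ω = 1 ∨ X i ω = -1 :=
    ae_all_iff.2 fun i => ae_eq_one_or_eq_neg_one (hmeas i) (hlaw1 i) (hlaw2 i)
  refine eventuallyEq_set.2 (hae.mono fun ω hω => ?_)
  have hS {m : ℕ} (hm : m ≤ n) : S X m ω = walk (upSteps X n ω) m := S_eq_walk_upSteps hω hm
  simp only [tauEq, IsFirstPassage, Set.mem_ofPred_eq, hS le_rfl]
  refine and_congr (by norm_cast; omega) ⟨fun h m hm => ?_, fun h m hm1 hm2 => ?_⟩
  · rcases m.eq_zero_or_pos with rfl | hpos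
    · simp [walk]
    · have : (0 : ℤ) < 1 + walk (upSteps X n ω) m := by exact_mod_cast hS hm.le ▸ h m hpos hm
      omega
  · rw [hS hm2.le]
    have := h m hm2
    norm_cast
    omega

end RandomWalk

/-- for the symmetric simple random walk,
`P(τ_1 = 2k+1) = (1/(k+1)) · C(2k,k) · 2^{-2k-1}` for every `k ≥ 0`. -/
theorem local_tau_one
    [MeasurableSpace Ω] (P : Measure Ω) [IsProbabilityMeasure P]
    (X : ℕ → Ω → ℝ)
    (hmeas : ∀ k, Measurable (X k))
    (hindep : iIndepFun X P)
    (hlaw1 : ∀ k, P {ω | X k ω = 1} = 1/2)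
    (hlaw2 : ∀ k, P {ω | X k ω = -1} = 1/2)
    (k : ℕ) :
    (P (tauEq X 1 (2 * k + 1))).toReal
      = (1 / (k + 1 : ℝ)) * (Nat.choose (2 * k) k : ℝ) * (1/2 : ℝ) ^ (2 * k + 1) := by
  have hprob : P (tauEq X 1 (2 * k + 1)) = catalan k * 2⁻¹ ^ (2 * k + 1) := by
    rw [measure_congr (tauEq_one_ae_eq hmeas hlaw1 hlaw2 _), measure_setOf_upSteps hmeas,
      sum_congr rfl fun A hA => measure_upSteps_eq_half_pow hmeas hindep hlaw1
        (mem_powerset.1 (mem_filter.1 hA).1), sum_const, card_firstPassage, nsmul_eq_mul]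
  have hcatalan : (k + 1 : ℝ) * catalan k = Nat.choose (2 * k) k := by
    exact_mod_cast
      (succ_mul_catalan_eq_centralBinom k).trans (Nat.centralBinom_eq_two_mul_choose k)
  rw [hprob, ENNReal.toReal_mul, ENNReal.toReal_pow, ENNReal.toReal_natCast, ENNReal.toReal_inv,
    ENNReal.toReal_ofNat, ← hcatalan]
  field_simp

end Stmt1
end

section
/- Let S(n)=X_1+⋯+X_n be a random walk whose increments X_k are i.i.d. integer-valued with P(X_1 ≥ −1)=1 (a left-continuous random walk), and let τ_x=inf{n≥1 : x+S(n)≤0}. Then for all integers x≥1 and n≥1: P(τ_x=n) = (x/n)·P(S(n)=−x). -/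
open MeasureTheory ProbabilityTheory Filter

namespace Stmt9

variable {Ω : Type*}

/-- Partial sums of the integer-valued increments: `S n = X 0 + ⋯ + X (n-1)`. -/
def S (X : ℕ → Ω → ℤ) (n : ℕ) (ω : Ω) : ℤ := ∑ k ∈ Finset.range n, X k ω

/-- The event `τ_x = n`: the first time `k ≥ 1` with `x + S k ≤ 0` equals `n`. -/
def tauEq (X : ℕ → Ω → ℤ) (x : ℤ) (n : ℕ) : Set Ω :=
  {ω | x + S X n ω ≤ 0 ∧ ∀ k, 1 ≤ k → k < n → 0 < x + S X k ω}

/-!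
Rotating the increment vector `(X 0, …, X (n-1))` cyclically does not change its law. For a fixed
vector with sum `-x` and all entries `≥ -1`, exactly `x` of its `n` rotations reach `-x` for the
first time at time `n` (the cycle lemma), and no rotation does so if the sum is not `-x`. Averaging
over the rotations gives `n · P(τ_x = n) = x · P(S n = -x)`.
-/

open Finset
open scoped ENNReal

section CycleLemma

variable {s : ℕ → ℤ} {n x : ℕ}

def IsLowerRecord (s : ℕ → ℤ) (m : ℕ) : Prop := ∀ l < m, s m < s l

def prefixMin (s : ℕ → ℤ) (N : ℕ) : ℤ := (range (N + 1)).inf' nonempty_range_add_one s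

lemma prefixMin_le {l N : ℕ} (h : l ≤ N) : prefixMin s N ≤ s l :=
  inf'_le _ (mem_range_succ_iff.2 h)

lemma exists_eq_prefixMin (s : ℕ → ℤ) (N : ℕ) : ∃ l ≤ N, s l = prefixMin s N := by
  obtain ⟨l, hl, h⟩ := exists_mem_eq_inf' nonempty_range_add_one s
  exact ⟨l, mem_range_succ_iff.1 hl, h.symm⟩

lemma prefixMin_succ (N : ℕ) : prefixMin s (N + 1) = min (prefixMin s N) (s (N + 1)) := by
  simp only [prefixMin, range_add_one (n := N + 1), inf'_insert nonempty_range_add_one]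
  exact min_comm _ _

lemma isLowerRecord_succ_iff {N : ℕ} : IsLowerRecord s (N + 1) ↔ s (N + 1) < prefixMin s N := by
  simp [IsLowerRecord, prefixMin, lt_inf'_iff]

open scoped Classical in
/-- Since `s` moves down by at most one per step, each new record lies exactly one below the
previous running minimum. -/
lemma count_isLowerRecord (hskip : ∀ m, s m - 1 ≤ s (m + 1)) (N : ℕ) :
    (Nat.count (IsLowerRecord s) (N + 1) : ℤ) = s 0 + 1 - prefixMin s N := by
  induction N with
  | zero => simp [Nat.count_succ, IsLowerRecord, prefixMin]
  | succ N ih =>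
    have hstep := hskip N
    have hmin := prefixMin_le (s := s) le_rfl (l := N)
    rw [Nat.count_succ, prefixMin_succ, Nat.cast_add, ih]
    split_ifs with h
    · have := isLowerRecord_succ_iff.1 h
      omega
    · have := isLowerRecord_succ_iff.not.1 h
      omega

lemma prefixMin_add_period (hper : ∀ m, s (m + n) = s m - x) {N : ℕ} (hN : n ≤ N + 1) :
    prefixMin s (N + n) = prefixMin s N - x := by
  apply le_antisymm
  · obtain ⟨l, hl, hsl⟩ := exists_eq_prefixMin s N
    have := prefixMin_le (s := s) (show l + n ≤ N + n by omega)
    have := hper l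
    omega
  · obtain ⟨m, hm, hsm⟩ := exists_eq_prefixMin s (N + n)
    rw [← hsm]
    by_cases h : m ≤ N
    · have := prefixMin_le (s := s) h
      omega
    · obtain ⟨l, rfl⟩ : ∃ l, m = l + n := ⟨m - n, by omega⟩
      have := prefixMin_le (s := s) (show l ≤ N by omega)
      have := hper l
      omega

open scoped Classical in
lemma count_isLowerRecord_add_period (hskip : ∀ m, s m - 1 ≤ s (m + 1))
    (hper : ∀ m, s (m + n) = s m - x) (hn : 0 < n) :
    Nat.count (IsLowerRecord s) (n + n) = Nat.count (IsLowerRecord s) n + x := by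
  obtain ⟨N, rfl⟩ : ∃ N, n = N + 1 := ⟨n - 1, by omega⟩
  have h₁ := count_isLowerRecord hskip (N + (N + 1))
  have h₂ := count_isLowerRecord hskip N
  have h₃ := prefixMin_add_period hper (N := N) le_rfl
  rw [show N + 1 + (N + 1) = N + (N + 1) + 1 by ring]
  omega

def IsFirstPassage (s : ℕ → ℤ) (x : ℤ) (j n : ℕ) : Prop :=
  s (j + n) ≤ s j - x ∧ ∀ k, 0 < k → k < n → s j - x < s (j + k)

lemma IsFirstPassage.apply_add_eq {x : ℤ} {j : ℕ} (hskip : ∀ m, s m - 1 ≤ s (m + 1)) (hx : 0 < x)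
    (h : IsFirstPassage s x j n) : s (j + n) = s j - x := by
  obtain ⟨hle, hlt⟩ := h
  obtain _ | n := n
  · simp at hle
    omega
  · have hprev : s j - x < s (j + n) := by
      rcases n.eq_zero_or_pos with rfl | hn
      · simpa using hx
      · exact hlt n hn (by omega)
    have := hskip (j + n)
    rw [← add_assoc] at hle ⊢
    omega

lemma isLowerRecord_add_period_iff (hper : ∀ m, s (m + n) = s m - x) (hx : 0 < x) {j : ℕ}
    (hj : j < n) : IsLowerRecord s (j + n) ↔ IsFirstPassage s x j n := by
  unfold IsLowerRecord IsFirstPassage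
  rw [hper]
  constructor
  · intro h
    exact ⟨le_rfl, fun k _ hkn => h (j + k) (by omega)⟩
  · rintro ⟨-, h⟩ l hl
    rcases lt_trichotomy l j with hlj | rfl | hjl
    · have := h (l + n - j) (by omega) (by omega)
      rw [show j + (l + n - j) = l + n by omega, hper] at this
      omega
    · omega
    · have := h (l - j) (by omega) (by omega)
      rw [show j + (l - j) = l by omega] at this
      omega

open scoped Classical in
/-- The cycle lemma: the starting times `j < n` with first passage after `n` steps are the `j`
with a record at time `j + n`, and the walk sets exactly `x` records during its second period. -/
theorem count_isFirstPassage (hskip : ∀ m, s m - 1 ≤ s (m + 1))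
    (hper : ∀ m, s (m + n) = s m - x) (hx : 0 < x) :
    Nat.count (IsFirstPassage s x · n) n = x := by
  have hn : 0 < n := Nat.pos_of_ne_zero fun h => by
    have := hper 0
    rw [h, add_zero] at this
    omega
  have hshift : Nat.count (fun j => IsLowerRecord s (n + j)) n =
      Nat.count (IsFirstPassage s x · n) n := by
    simp only [Nat.count_eq_card_filter_range]
    refine congrArg card (filter_congr fun j hj => ?_)
    rw [add_comm, isLowerRecord_add_period_iff hper hx (mem_range.1 hj)]
  have := count_isLowerRecord_add_period hskip hper hn
  rw [Nat.count_add, hshift] at this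
  omega

end CycleLemma

section CyclicWalk

open Fin.NatCast

variable {n : ℕ} [NeZero n]

/-- Partial sums of the `n`-periodic extension of `y` to `ℕ`. -/
def cyclicWalk (y : Fin n → ℤ) (k : ℕ) : ℤ := ∑ i ∈ range k, y i

lemma cyclicWalk_succ (y : Fin n → ℤ) (k : ℕ) :
    cyclicWalk y (k + 1) = cyclicWalk y k + y k :=
  sum_range_succ _ _

lemma cyclicWalk_period_add (y : Fin n → ℤ) (k : ℕ) :
    cyclicWalk y (n + k) = cyclicWalk y n + cyclicWalk y k := by
  simp [cyclicWalk, sum_range_add]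

lemma cyclicWalk_rotate (y : Fin n → ℤ) (c : Fin n) (k : ℕ) :
    cyclicWalk (fun i => y (i + c)) k = cyclicWalk y (c + k) - cyclicWalk y c := by
  simp only [cyclicWalk, sum_range_add, add_sub_cancel_left, Nat.cast_add, Fin.cast_val_eq_self,
    add_comm c]

lemma isFirstPassage_cyclicWalk_rotate_iff (y : Fin n → ℤ) (c : Fin n) (x : ℤ) :
    IsFirstPassage (cyclicWalk fun i => y (i + c)) x 0 n ↔
      IsFirstPassage (cyclicWalk y) x c n := by
  simp only [IsFirstPassage, cyclicWalk_rotate, zero_add, add_zero, sub_self]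
  constructor <;> rintro ⟨h₁, h₂⟩ <;> refine ⟨by linarith, fun k hk hkn => ?_⟩ <;>
    linarith [h₂ k hk hkn]

open scoped Classical in
lemma card_rotate_isFirstPassage {x : ℕ} (hx : 0 < x) {y : Fin n → ℤ} (hy : ∀ i, -1 ≤ y i) :
    #{c : Fin n | IsFirstPassage (cyclicWalk fun i => y (i + c)) x 0 n} =
      if cyclicWalk y n = -x then x else 0 := by
  have hskip : ∀ m, cyclicWalk y m - 1 ≤ cyclicWalk y (m + 1) := fun m => by
    rw [cyclicWalk_succ]
    linarith [hy m]
  simp only [isFirstPassage_cyclicWalk_rotate_iff]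
  split_ifs with hsum
  · have hper : ∀ m, cyclicWalk y (m + n) = cyclicWalk y m - x := fun m => by
      rw [add_comm, cyclicWalk_period_add, hsum]
      ring
    rw [card_filter, Fin.sum_univ_eq_sum_range
      (fun c => if IsFirstPassage (cyclicWalk y) x c n then 1 else 0), ← card_filter,
      ← Nat.count_eq_card_filter_range]
    exact count_isFirstPassage hskip hper hx
  · refine card_eq_zero.2 (filter_eq_empty_iff.2 fun c _ hc => hsum ?_)
    have := (hc.apply_add_eq hskip (by exact_mod_cast hx))
    rw [add_comm, cyclicWalk_period_add] at this
    linarith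

lemma S_eq_cyclicWalk (X : ℕ → Ω → ℤ) (ω : Ω) {k : ℕ} (hk : k ≤ n) :
    S X k ω = cyclicWalk (fun i : Fin n => X i ω) k :=
  sum_congr rfl fun i hi => by
    simp [Fin.val_cast_of_lt (lt_of_lt_of_le (mem_range.1 hi) hk)]

lemma tauEq_eq_preimage (X : ℕ → Ω → ℤ) (x : ℤ) :
    tauEq X x n = (fun ω (i : Fin n) => X i ω) ⁻¹' {y | IsFirstPassage (cyclicWalk y) x 0 n} := by
  ext ω
  have hS k (hk : k ≤ n) := S_eq_cyclicWalk X ω hk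
  have h₀ : cyclicWalk (fun i : Fin n => X i ω) 0 = 0 := sum_range_zero _
  simp only [tauEq, IsFirstPassage, Set.mem_preimage, Set.mem_ofPred_eq, zero_add, h₀,
    hS n le_rfl]
  refine and_congr (by omega) ⟨fun h k hk hkn => ?_, fun h k hk hkn => ?_⟩
  · have := h k hk hkn
    rw [hS k hkn.le] at this
    omega
  · have := h k hk hkn
    rw [hS k hkn.le]
    omega

lemma setOf_S_eq_preimage (X : ℕ → Ω → ℤ) (x : ℤ) :
    {ω | S X n ω = x} = (fun ω (i : Fin n) => X i ω) ⁻¹' {y | cyclicWalk y n = x} := by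
  ext ω
  simp [S_eq_cyclicWalk X ω le_rfl]

end CyclicWalk

lemma measurePreserving_comp_perm {ι β : Type*} [Fintype ι] [MeasurableSpace β] (μ : Measure β)
    [SigmaFinite μ] (e : Equiv.Perm ι) :
    MeasurePreserving (fun y : ι → β => y ∘ e) (Measure.pi fun _ => μ) (Measure.pi fun _ => μ) := by
  convert measurePreserving_arrowCongr' (fun _ => μ) (fun _ => μ) e.symm (MeasurableEquiv.refl β)
    fun _ => MeasurePreserving.id μ
  ext y
  simp [MeasurableEquiv.arrowCongr', Equiv.arrowCongr', Equiv.arrowCongr]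

open scoped Classical in
lemma card_mul_measure_eq_of_ae_card_eq {α ι : Type*} [MeasurableSpace α] [Fintype ι]
    {ν : Measure α} {T : ι → α → α} (hT : ∀ c, MeasurePreserving (T c) ν ν) {A B : Set α}
    (hA : MeasurableSet A) (hB : MeasurableSet B) {k : ℕ}
    (h : ∀ᵐ y ∂ν, #{c | T c y ∈ A} = if y ∈ B then k else 0) :
    Fintype.card ι * ν A = k * ν B := by
  have hcount : ∀ᵐ y ∂ν, ∑ c, (T c ⁻¹' A).indicator 1 y = B.indicator (fun _ => (k : ℝ≥0∞)) y := by
    filter_upwards [h] with y hy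
    simp only [Set.indicator_apply, Set.mem_preimage, Pi.one_apply, sum_boole, hy]
    split_ifs <;> simp
  calc Fintype.card ι * ν A = ∑ c, ν (T c ⁻¹' A) := by
        simp [(hT _).measure_preimage hA.nullMeasurableSet]
    _ = ∑ c, ∫⁻ y, (T c ⁻¹' A).indicator 1 y ∂ν := by
        simp [lintegral_indicator_one ((hT _).measurable hA)]
    _ = ∫⁻ y, ∑ c, (T c ⁻¹' A).indicator 1 y ∂ν :=
        (lintegral_finsetSum _ fun c _ => measurable_one.indicator ((hT c).measurable hA)).symm
    _ = ∫⁻ y, B.indicator (fun _ => (k : ℝ≥0∞)) y ∂ν := lintegral_congr_ae hcount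
    _ = k * ν B := lintegral_indicator_const hB k

lemma map_increments_eq_pi {β : Type*} [MeasurableSpace Ω] [MeasurableSpace β] {P : Measure Ω}
    [IsProbabilityMeasure P] {X : ℕ → Ω → β} (hindep : iIndepFun X P)
    (hident : ∀ k, IdentDistrib (X k) (X 0) P P) (n : ℕ) :
    P.map (fun ω (i : Fin n) => X i ω) = Measure.pi fun _ => P.map (X 0) := by
  rw [iIndepFun.map_fun_eq_pi_map (fun i : Fin n => (hident i).aemeasurable_fst)
    (hindep.precomp Fin.val_injective)]
  congr with i : 1
  exact (hident i).map_eq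

theorem kemperman_general
    [MeasurableSpace Ω] (P : Measure Ω) [IsProbabilityMeasure P]
    (X : ℕ → Ω → ℤ)
    (hindep : iIndepFun X P)
    (hident : ∀ k, IdentDistrib (X k) (X 0) P P)
    (hleft : P {ω | -1 ≤ X 0 ω} = 1)
    (x n : ℕ) (hx : 1 ≤ x) (hn : 1 ≤ n) :
    (P (tauEq X (x : ℤ) n)).toReal
      = ((x : ℝ) / n) * (P {ω | S X n ω = -(x : ℤ)}).toReal := by
  have : NeZero n := ⟨by omega⟩
  set μ := P.map (X 0)
  have : IsProbabilityMeasure μ := Measure.isProbabilityMeasure_map (hident 0).aemeasurable_fst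
  have hJ : AEMeasurable (fun ω (i : Fin n) => X i ω) P :=
    aemeasurable_pi_lambda _ fun i => (hident i).aemeasurable_fst
  have hμ : ∀ᵐ t ∂μ, -1 ≤ t := by
    rw [ae_iff_measure_eq (MeasurableSet.of_discrete).nullMeasurableSet, measure_univ,
      Measure.map_apply_of_aemeasurable (hident 0).aemeasurable_fst .of_discrete]
    exact hleft
  have hskipfree : ∀ᵐ y ∂(Measure.pi fun _ : Fin n => μ), ∀ i, -1 ≤ y i :=
    ae_all_iff.2 fun i => Measure.tendsto_eval_ae_ae.eventually hμ
  have hcount := card_mul_measure_eq_of_ae_card_eq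
    (fun c => measurePreserving_comp_perm μ (Equiv.addRight c))
    (A := {y | IsFirstPassage (cyclicWalk y) x 0 n}) (B := {y | cyclicWalk y n = -x})
    .of_discrete .of_discrete
    (hskipfree.mono fun y hy => by convert card_rotate_isFirstPassage hx hy <;> rfl)
  rw [tauEq_eq_preimage, setOf_S_eq_preimage, ← Measure.map_apply_of_aemeasurable hJ .of_discrete,
    ← Measure.map_apply_of_aemeasurable hJ .of_discrete, map_increments_eq_pi hindep hident]
  rw [Fintype.card_fin] at hcount
  have hreal := congrArg ENNReal.toReal hcount
  simp only [ENNReal.toReal_mul, ENNReal.toReal_natCast] at hreal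
  rw [div_mul_eq_mul_div, eq_div_iff (by positivity), mul_comm, hreal]

/-- Kemperman's formula: for a left-continuous random walk with i.i.d.
integer-valued increments satisfying `P(X_1 ≥ -1) = 1`, one has
`P(τ_x = n) = (x/n) · P(S(n) = -x)` for all integers `x ≥ 1` and `n ≥ 1`. -/
theorem kemperman
    [MeasurableSpace Ω] (P : Measure Ω) [IsProbabilityMeasure P]
    (X : ℕ → Ω → ℤ)
    (hmeas : ∀ k, Measurable (X k))
    (hindep : iIndepFun X P)
    (hident : ∀ k, IdentDistrib (X k) (X 0) P P)
    (hleft : P {ω | -1 ≤ X 0 ω} = 1)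
    (x n : ℕ) (hx : 1 ≤ x) (hn : 1 ≤ n) :
    (P (tauEq X (x : ℤ) n)).toReal
      = ((x : ℝ) / n) * (P {ω | S X n ω = -(x : ℤ)}).toReal :=
  kemperman_general P X hindep hident hleft x n hx hn

end Stmt9
end

section
/- Let S(n)=X_1+⋯+X_n be a random walk with i.i.d. real-valued increments. Define τ_0 = inf{n≥1 : S(n) ≤ 0} and τ⁺ = inf{n≥1 : S(n) > 0} (either may be infinite with positive probability; s^τ is interpreted as 0 on {τ=∞}). Then for every s∈[0,1): (1 − E[s^{τ_0}])·(1 − E[s^{τ⁺}]) = 1 − s. -/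
/-! Write `u k = P(τ⁺ > k)` and `v k = P(τ_0 > k)`. Split according to the last time `k ≤ n` at
which `S 0, …, S n` attains its minimum: the path before `k`, read backwards from `k`, stays `≤ 0`,
and the path after `k` stays `> 0` relative to `S k`. These two pieces are built from disjoint
blocks of increments and are distributed as the walk itself, so `∑_{k ≤ n} u k v (n - k) = 1`,
that is `U(s) V(s) = (1 - s)⁻¹` for the generating functions. Summation by parts gives
`1 - E[s^τ] = (1 - s) ∑ s^k P(τ > k)`, and the identity follows. -/

open MeasureTheory ProbabilityTheory Filter

namespace Stmt12

variable {Ω : Type*}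

/-- Partial sums of the increments: `S n = X 0 + ⋯ + X (n-1)`. -/
def S (X : ℕ → Ω → ℝ) (n : ℕ) (ω : Ω) : ℝ := ∑ k ∈ Finset.range n, X k ω

/-- The event `τ_0 = n`: the first time `k ≥ 1` with `S k ≤ 0` equals `n`. -/
def tau0Eq (X : ℕ → Ω → ℝ) (n : ℕ) : Set Ω :=
  {ω | S X n ω ≤ 0 ∧ ∀ k, 1 ≤ k → k < n → 0 < S X k ω}

/-- The event `τ⁺ = n`: the first time `k ≥ 1` with `S k > 0` equals `n`. -/
def tauPlusEq (X : ℕ → Ω → ℝ) (n : ℕ) : Set Ω :=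
  {ω | 0 < S X n ω ∧ ∀ k, 1 ≤ k → k < n → S X k ω ≤ 0}

open Set

-- `staysIn X (Iic 0) k` is the event `τ⁺ > k`, and `staysIn X (Ioi 0) k` is `τ_0 > k`.
def staysIn (X : ℕ → Ω → ℝ) (C : Set ℝ) (k : ℕ) : Set Ω :=
  {ω | ∀ m, 1 ≤ m → m ≤ k → S X m ω ∈ C}

def lastMinAt (X : ℕ → Ω → ℝ) (n k : ℕ) : Set Ω :=
  {ω | (∀ j < k, S X k ω ≤ S X j ω) ∧ ∀ j, k < j → j ≤ n → S X k ω < S X j ω}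

-- An injective extension of `i ↦ k - 1 - i` from `[0, k)` to `ℕ`, so that the reversed increments
-- are again an i.i.d. family.
def reflectBelow (k i : ℕ) : ℕ := if i < k then k - 1 - i else i

section Events

variable {X : ℕ → Ω → ℝ} {C : Set ℝ}

@[simp]
lemma staysIn_zero : staysIn X C 0 = univ :=
  eq_univ_of_forall fun _ _ h₁ h₂ => absurd h₂ (by omega)

lemma staysIn_succ (n : ℕ) :
    staysIn X C (n + 1) = staysIn X C n ∩ {ω | S X (n + 1) ω ∈ C} := by
  ext ω
  simp only [staysIn, mem_inter_iff, mem_ofPred_eq]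
  refine ⟨fun h => ⟨fun m h₁ h₂ => h m h₁ (by omega), h _ (by omega) le_rfl⟩, ?_⟩
  rintro ⟨h, hn⟩ m h₁ h₂
  rcases Nat.lt_or_ge m (n + 1) with hm | hm
  · exact h m h₁ (by omega)
  · rwa [show m = n + 1 by omega]

lemma tau0Eq_succ (n : ℕ) :
    tau0Eq X (n + 1) = staysIn X (Ioi 0) n \ {ω | S X (n + 1) ω ∈ Ioi 0} := by
  ext ω
  simp only [tau0Eq, staysIn, Set.mem_sdiff, mem_ofPred_eq, mem_Ioi, not_lt, Nat.lt_succ_iff]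
  exact and_comm

lemma tauPlusEq_succ (n : ℕ) :
    tauPlusEq X (n + 1) = staysIn X (Iic 0) n \ {ω | S X (n + 1) ω ∈ Iic 0} := by
  ext ω
  simp only [tauPlusEq, staysIn, Set.mem_sdiff, mem_ofPred_eq, mem_Iic, not_le, Nat.lt_succ_iff]
  exact and_comm

lemma S_shift (k m : ℕ) (ω : Ω) :
    S (fun i => X (k + i)) m ω = S X (k + m) ω - S X k ω := by
  simp only [S, Finset.sum_range_add]
  ring

lemma reflectBelow_injective (k : ℕ) : (reflectBelow k).Injective := by
  intro i j h
  simp only [reflectBelow] at h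
  split_ifs at h <;> omega

lemma reflectBelow_lt {k i : ℕ} (hi : i < k) : reflectBelow k i < k := by
  simp only [reflectBelow, if_pos hi]
  omega

lemma S_reflectBelow {k m : ℕ} (hm : m ≤ k) (ω : Ω) :
    S (fun i => X (reflectBelow k i)) m ω = S X k ω - S X (k - m) ω := by
  have hrefl : S (fun i => X (reflectBelow k i)) m ω = ∑ j ∈ Finset.Ico (k - m) k, X j ω := by
    rw [S, ← Finset.sum_range_reflect, Finset.sum_Ico_eq_sum_range, show k - (k - m) = m by omega]
    refine Finset.sum_congr rfl fun i hi => ?_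
    rw [Finset.mem_range] at hi
    rw [reflectBelow, if_pos (by omega)]
    congr 1
    omega
  rw [hrefl, eq_sub_iff_add_eq', S, S, Finset.sum_range_add_sum_Ico _ (Nat.sub_le k m)]

lemma staysIn_reflectBelow (k : ℕ) :
    staysIn (fun i => X (reflectBelow k i)) (Iic 0) k = {ω | ∀ j < k, S X k ω ≤ S X j ω} := by
  ext ω
  simp only [staysIn, mem_ofPred_eq, mem_Iic]
  constructor
  · intro h j hj
    have := h (k - j) (by omega) (by omega)
    rw [S_reflectBelow (by omega), show k - (k - j) = j by omega] at this
    linarith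
  · intro h m h₁ h₂
    rw [S_reflectBelow h₂]
    linarith [h (k - m) (by omega)]

lemma staysIn_shift (n k : ℕ) :
    staysIn (fun i => X (k + i)) (Ioi 0) (n - k)
      = {ω | ∀ j, k < j → j ≤ n → S X k ω < S X j ω} := by
  ext ω
  simp only [staysIn, mem_ofPred_eq, mem_Ioi, S_shift, sub_pos]
  constructor
  · intro h j hj₁ hj₂
    simpa [show k + (j - k) = j by omega] using h (j - k) (by omega) (by omega)
  · intro h m h₁ h₂
    exact h (k + m) (by omega) (by omega)

lemma lastMinAt_eq_inter (n k : ℕ) :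
    lastMinAt X n k = staysIn (fun i => X (reflectBelow k i)) (Iic 0) k
      ∩ staysIn (fun i => X (k + i)) (Ioi 0) (n - k) := by
  rw [staysIn_reflectBelow, staysIn_shift]
  rfl

lemma pairwiseDisjoint_lastMinAt (n : ℕ) :
    (Finset.range (n + 1) : Set ℕ).PairwiseDisjoint (lastMinAt X n) := by
  intro k hk l hl hkl
  simp only [Finset.coe_range, mem_Iio] at hk hl
  refine disjoint_left.2 fun ω hωk hωl => ?_
  rcases lt_or_gt_of_ne hkl with h | h
  · linarith [hωk.2 l h (by omega), hωl.1 k h]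
  · linarith [hωl.2 k h (by omega), hωk.1 l h]

lemma iUnion_lastMinAt (n : ℕ) : ⋃ k ∈ Finset.range (n + 1), lastMinAt X n k = univ := by
  classical
  refine eq_univ_of_forall fun ω => ?_
  obtain ⟨i, hi, hmin⟩ :=
    (Finset.range (n + 1)).exists_min_image (S X · ω) Finset.nonempty_range_add_one
  let IsArgmin (j : ℕ) : Prop := ∀ i ≤ n, S X j ω ≤ S X i ω
  have hi' : IsArgmin i := fun i' hi' => hmin i' (Finset.mem_range.2 (by omega))
  have hk : IsArgmin (Nat.findGreatest IsArgmin n) :=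
    Nat.findGreatest_spec (Finset.mem_range.1 hi |> Nat.lt_succ_iff.1) hi'
  have hkn : Nat.findGreatest IsArgmin n ≤ n := Nat.findGreatest_le n
  refine mem_biUnion (Finset.mem_range.2 (by omega))
    ⟨fun j hj => hk j (by omega), fun j hj₁ hj₂ => ?_⟩
  by_contra! hj
  exact Nat.findGreatest_is_greatest hj₁ hj₂ fun i hi => hj.trans (hk i hi)

end Events

section Measurability

variable {m : MeasurableSpace Ω} {X : ℕ → Ω → ℝ}

lemma measurable_S {n : ℕ} (hX : ∀ i < n, Measurable (X i)) : Measurable (S X n) :=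
  Finset.measurable_sum _ fun i hi => hX i (Finset.mem_range.1 hi)

lemma measurableSet_staysIn {C : Set ℝ} {k : ℕ} (hX : ∀ i < k, Measurable (X i))
    (hC : MeasurableSet C) : MeasurableSet (staysIn X C k) := by
  simp only [staysIn, ofPred_forall]
  exact .iInter fun j => .iInter fun _ => .iInter fun hj =>
    measurable_S (fun i hi => hX i (by omega)) hC

lemma measurableSet_lastMinAt (hX : ∀ i, Measurable (X i)) (n k : ℕ) :
    MeasurableSet (lastMinAt X n k) := by
  simp only [lastMinAt, ofPred_and, ofPred_forall]
  exact .inter (.iInter fun j => .iInter fun _ => measurableSet_le (measurable_S fun i _ => hX i)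
      (measurable_S fun i _ => hX i))
    (.iInter fun j => .iInter fun _ => .iInter fun _ => measurableSet_lt
      (measurable_S fun i _ => hX i) (measurable_S fun i _ => hX i))

end Measurability

section IID

variable {ι κ β : Type*} [MeasurableSpace β] {X : ι → Ω → β}

lemma measurable_iSup_comap {S : Set ι} {i : ι} (hi : i ∈ S) :
    Measurable[⨆ j ∈ S, MeasurableSpace.comap (X j) ‹_›] (X i) :=
  (comap_measurable (X i)).mono (le_iSup₂_of_le i hi le_rfl) le_rfl

variable [MeasurableSpace Ω] {P : Measure Ω}

lemma map_reindex_eq_infinitePi (hmeas : ∀ i, Measurable (X i)) (hindep : iIndepFun X P)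
    {i₀ : ι} (hident : ∀ i, IdentDistrib (X i) (X i₀) P P) {g : κ → ι} (hg : g.Injective) :
    P.map (fun ω k => X (g k) ω) = Measure.infinitePi fun _ : κ => P.map (X i₀) := by
  rw [(hindep.precomp hg).map_fun_eq_infinitePi_map fun k => hmeas (g k)]
  simp_rw [fun k => (hident (g k)).map_eq]

lemma measure_preimage_reindex_eq (hmeas : ∀ i, Measurable (X i)) (hindep : iIndepFun X P)
    {i₀ : ι} (hident : ∀ i, IdentDistrib (X i) (X i₀) P P) {g g' : κ → ι} (hg : g.Injective)
    (hg' : g'.Injective) {A : Set (κ → β)} (hA : MeasurableSet A) :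
    P ((fun ω k => X (g k) ω) ⁻¹' A) = P ((fun ω k => X (g' k) ω) ⁻¹' A) := by
  rw [← Measure.map_apply (by fun_prop) hA, ← Measure.map_apply (by fun_prop) hA,
    map_reindex_eq_infinitePi hmeas hindep hident hg,
    map_reindex_eq_infinitePi hmeas hindep hident hg']

lemma measure_inter_eq_mul_of_disjoint (hmeas : ∀ i, Measurable (X i)) (hindep : iIndepFun X P)
    {S T : Set ι} (hST : Disjoint S T) {A B : Set Ω}
    (hA : MeasurableSet[⨆ i ∈ S, MeasurableSpace.comap (X i) ‹_›] A)
    (hB : MeasurableSet[⨆ i ∈ T, MeasurableSpace.comap (X i) ‹_›] B) :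
    P (A ∩ B) = P A * P B :=
  (Indep_iff _ _ _).1 (indep_iSup_of_disjoint (fun i => (hmeas i).comap_le) hindep hST) A B hA hB

end IID

lemma measureReal_staysIn_eq_add [MeasurableSpace Ω] (P : Measure Ω) [IsFiniteMeasure P]
    {X : ℕ → Ω → ℝ} (hmeas : ∀ i, Measurable (X i)) {C : Set ℝ} (hC : MeasurableSet C) (n : ℕ) :
    P.real (staysIn X C n)
      = P.real (staysIn X C (n + 1)) + P.real (staysIn X C n \ {ω | S X (n + 1) ω ∈ C}) := by
  rw [staysIn_succ]
  exact (measureReal_inter_add_sdiff ((measurable_S fun i _ => hmeas i) hC)).symm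

section RandomWalk

variable [MeasurableSpace Ω] {P : Measure Ω} {X : ℕ → Ω → ℝ}
  (hmeas : ∀ i, Measurable (X i)) (hindep : iIndepFun X P)
  (hident : ∀ i, IdentDistrib (X i) (X 0) P P)
include hmeas hindep hident

lemma measure_staysIn_reindex {g : ℕ → ℕ} (hg : g.Injective) {C : Set ℝ} (hC : MeasurableSet C)
    (k : ℕ) : P (staysIn (fun i => X (g i)) C k) = P (staysIn X C k) :=
  measure_preimage_reindex_eq hmeas hindep hident hg Function.injective_id
    (measurableSet_staysIn (fun i _ => measurable_pi_apply i) hC)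

lemma measure_lastMinAt (n k : ℕ) :
    P (lastMinAt X n k) = P (staysIn X (Iic 0) k) * P (staysIn X (Ioi 0) (n - k)) := by
  rw [lastMinAt_eq_inter, measure_inter_eq_mul_of_disjoint hmeas hindep (Iio_disjoint_Ici le_rfl)
      (measurableSet_staysIn (fun i hi => measurable_iSup_comap (reflectBelow_lt hi))
        measurableSet_Iic)
      (measurableSet_staysIn (fun i _ => measurable_iSup_comap (Nat.le_add_right k i))
        measurableSet_Ioi),
    measure_staysIn_reindex hmeas hindep hident (reflectBelow_injective k) measurableSet_Iic,
    measure_staysIn_reindex hmeas hindep hident (add_right_injective k) measurableSet_Ioi]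

lemma sum_measureReal_staysIn_mul [IsProbabilityMeasure P] (n : ℕ) :
    ∑ k ∈ Finset.range (n + 1), P.real (staysIn X (Iic 0) k) * P.real (staysIn X (Ioi 0) (n - k))
      = 1 := by
  rw [← probReal_univ (μ := P), ← iUnion_lastMinAt n,
    measureReal_biUnion_finset (pairwiseDisjoint_lastMinAt n)
      fun k _ => measurableSet_lastMinAt hmeas n k]
  refine Finset.sum_congr rfl fun k _ => ?_
  simp only [measureReal_def, measure_lastMinAt hmeas hindep hident, ENNReal.toReal_mul]

end RandomWalk

section GeneratingFunctions

variable {s : ℝ}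

lemma summable_norm_pow_mul (hs : ‖s‖ < 1) {u : ℕ → ℝ} (hu : ∀ k, ‖u k‖ ≤ 1) :
    Summable fun k => ‖s ^ k * u k‖ :=
  (summable_geometric_of_lt_one (norm_nonneg s) hs).of_nonneg_of_le (fun _ => norm_nonneg _)
    fun k => by
      rw [norm_mul, norm_pow]
      exact mul_le_of_le_one_right (by positivity) (hu k)

lemma one_sub_tsum_eq_mul_tsum {w c : ℕ → ℝ} (hrec : ∀ n, w n = w (n + 1) + c n) (hw0 : w 0 = 1)
    (hw : Summable fun k => s ^ k * w k) :
    1 - ∑' n, s ^ (n + 1) * c n = (1 - s) * ∑' k, s ^ k * w k := by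
  have hterm : ∀ n, s ^ (n + 1) * c n = s * (s ^ n * w n) - s ^ (n + 1) * w (n + 1) := by
    intro n
    rw [hrec n]
    ring
  rw [tsum_congr hterm, (hw.mul_left s).tsum_sub ((summable_nat_add_iff 1).2 hw),
    tsum_mul_left, hw.tsum_eq_zero_add, pow_zero, hw0]
  ring

lemma tsum_mul_tsum_eq_inv_one_sub (hs : ‖s‖ < 1) {u v : ℕ → ℝ} (hu : ∀ k, ‖u k‖ ≤ 1)
    (hv : ∀ k, ‖v k‖ ≤ 1) (huv : ∀ n, ∑ k ∈ Finset.range (n + 1), u k * v (n - k) = 1) :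
    (∑' k, s ^ k * u k) * (∑' k, s ^ k * v k) = (1 - s)⁻¹ := by
  rw [tsum_mul_tsum_eq_tsum_sum_range_of_summable_norm (summable_norm_pow_mul hs hu)
    (summable_norm_pow_mul hs hv), ← tsum_geometric_of_norm_lt_one hs]
  refine tsum_congr fun n => ?_
  calc ∑ k ∈ Finset.range (n + 1), s ^ k * u k * (s ^ (n - k) * v (n - k))
      = ∑ k ∈ Finset.range (n + 1), s ^ n * (u k * v (n - k)) := by
        refine Finset.sum_congr rfl fun k hk => ?_
        rw [← pow_mul_pow_sub s (Nat.lt_succ_iff.1 (Finset.mem_range.1 hk))]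
        ring
    _ = s ^ n := by rw [← Finset.mul_sum, huv, mul_one]

end GeneratingFunctions

/-- Wiener–Hopf identity: for a random walk with i.i.d. real increments and
`s ∈ [0,1)`: `(1 - E[s^{τ_0}])(1 - E[s^{τ⁺}]) = 1 - s`, where on `{τ = ∞}` the value
`s^τ` is `0`, so `E[s^τ] = ∑_{n≥1} s^n P(τ = n)`. -/
theorem wiener_hopf
    [MeasurableSpace Ω] (P : Measure Ω) [IsProbabilityMeasure P]
    (X : ℕ → Ω → ℝ)
    (hmeas : ∀ k, Measurable (X k))
    (hindep : iIndepFun X P)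
    (hident : ∀ k, IdentDistrib (X k) (X 0) P P)
    (s : ℝ) (hs : s ∈ Set.Ico (0:ℝ) 1) :
    (1 - ∑' n : ℕ, s ^ (n + 1) * (P (tau0Eq X (n + 1))).toReal)
      * (1 - ∑' n : ℕ, s ^ (n + 1) * (P (tauPlusEq X (n + 1))).toReal)
      = 1 - s := by
  have hs' : ‖s‖ < 1 := by rw [Real.norm_of_nonneg hs.1]; exact hs.2
  have hprob (A : Set Ω) : ‖P.real A‖ ≤ 1 := by
    rw [Real.norm_of_nonneg measureReal_nonneg]
    exact measureReal_le_one
  have hsummable (C : Set ℝ) : Summable fun k => s ^ k * P.real (staysIn X C k) :=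
    (summable_norm_pow_mul hs' fun _ => hprob _).of_norm
  simp only [← measureReal_def, tau0Eq_succ, tauPlusEq_succ]
  rw [one_sub_tsum_eq_mul_tsum (measureReal_staysIn_eq_add P hmeas measurableSet_Ioi) (by simp)
      (hsummable _),
    one_sub_tsum_eq_mul_tsum (measureReal_staysIn_eq_add P hmeas measurableSet_Iic) (by simp)
      (hsummable _)]
  have hprod := tsum_mul_tsum_eq_inv_one_sub hs' (fun _ => hprob _) (fun _ => hprob _)
    (sum_measureReal_staysIn_mul hmeas hindep hident)
  have hs₁ : 1 - s ≠ 0 := by linarith [hs.2]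
  calc _ = (1 - s) * (1 - s) * ((∑' k, s ^ k * P.real (staysIn X (Iic 0) k))
        * ∑' k, s ^ k * P.real (staysIn X (Ioi 0) k)) := by ring
    _ = 1 - s := by rw [hprod]; field_simp

end Stmt12
end

section
/- Let S(n)=X_1+⋯+X_n be a random walk with i.i.d. real-valued increments whose common distribution is symmetric (X_1 and −X_1 have the same law) and atomless (P(X_1=x)=0 for every x). Let τ_0 = inf{n≥1 : S(n) ≤ 0}. Then E[s^{τ_0}] = 1 − √(1−s) for all s∈[0,1), and consequently P(τ_0>n) = C(2n,n)·2^{−2n} for every n≥1. -/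
/-!
Let `q n = P(τ₀ > n)`. Off a null set of ties, exactly one index `k ≤ n` maximizes
`S 0, …, S n`. That `k` is the maximizer iff `S j < S k` for `j < k`, i.e. `τ₀ > k` for the
reversed increments `X (k-1), …, X 0`, and `S j < S k` for `k < j ≤ n`, i.e. `τ₀ > n - k` for the
negated increments `-X k, -X (k+1), …`. Both reindexed families are again i.i.d. with the law of
`X 0` (by symmetry for the negated one) and they use disjoint blocks of increments, so
`∑_{k ≤ n} q k * q (n - k) = 1`. Since `q 0 = 1`, this convolution identity determines `q`, and
`C(2n,n)/4^n` satisfies it. Its generating function is `(1 - s)^(-1/2)`, because its square is the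
geometric series, and summation by parts turns this into `E[s^τ₀] = 1 - √(1 - s)`.
-/

open MeasureTheory ProbabilityTheory Filter

namespace Stmt13

variable {Ω : Type*}

/-- Partial sums of the increments: `S n = X 0 + ⋯ + X (n-1)`. -/
def S (X : ℕ → Ω → ℝ) (n : ℕ) (ω : Ω) : ℝ := ∑ k ∈ Finset.range n, X k ω

/-- The event `τ_0 = n`: the first time `k ≥ 1` with `S k ≤ 0` equals `n`. -/
def tau0Eq (X : ℕ → Ω → ℝ) (n : ℕ) : Set Ω :=
  {ω | S X n ω ≤ 0 ∧ ∀ k, 1 ≤ k → k < n → 0 < S X k ω}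

/-- The event `τ_0 > n`, i.e. `S k > 0` for all `1 ≤ k ≤ n`. -/
def tau0Gt (X : ℕ → Ω → ℝ) (n : ℕ) : Set Ω :=
  {ω | ∀ k, 1 ≤ k → k ≤ n → 0 < S X k ω}

open Finset

noncomputable def normCentralBinom (n : ℕ) : ℝ := n.centralBinom / 4 ^ n

lemma normCentralBinom_zero : normCentralBinom 0 = 1 := by simp [normCentralBinom]

lemma normCentralBinom_nonneg (n : ℕ) : 0 ≤ normCentralBinom n := by
  unfold normCentralBinom; positivity

lemma normCentralBinom_le_one (n : ℕ) : normCentralBinom n ≤ 1 :=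
  div_le_one_of_le₀ (by exact_mod_cast n.centralBinom_le_four_pow) (by positivity)

lemma mul_normCentralBinom_succ (n : ℕ) :
    (2 * n + 2) * normCentralBinom (n + 1) = (2 * n + 1) * normCentralBinom n := by
  have h : ((n + 1 : ℕ) : ℝ) * (n + 1).centralBinom = 2 * (2 * n + 1) * n.centralBinom := by
    exact_mod_cast n.succ_mul_centralBinom_succ
  simp only [normCentralBinom, pow_succ]
  field_simp
  push_cast at h
  linear_combination 2 * h

lemma sum_antidiagonal_mul_eq_sq {c : ℕ → ℝ}
    (hc : ∀ n : ℕ, (2 * n + 2) * c (n + 1) = (2 * n + 1) * c n) (n : ℕ) :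
    ∑ p ∈ antidiagonal n, c p.1 * c p.2 = c 0 ^ 2 := by
  set a : ℕ → ℝ := fun n => ∑ p ∈ antidiagonal n, c p.1 * c p.2 with ha
  have hmoment : ∀ n : ℕ, 2 * ∑ p ∈ antidiagonal n, (p.1 : ℝ) * (c p.1 * c p.2) = n * a n := by
    intro n
    rw [two_mul]
    nth_rewrite 2 [← Nat.sum_antidiagonal_swap]
    rw [← sum_add_distrib, ha, mul_sum]
    refine sum_congr rfl fun p hp => ?_
    rw [← mem_antidiagonal.mp hp, Prod.fst_swap, Prod.snd_swap]
    push_cast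
    ring
  have hstep : ∀ n, a (n + 1) = a n := by
    intro n
    refine mul_left_cancel₀ (by positivity : (n : ℝ) + 1 ≠ 0) ?_
    calc ((n : ℝ) + 1) * a (n + 1)
        = 2 * ∑ p ∈ antidiagonal (n + 1), (p.1 : ℝ) * (c p.1 * c p.2) := by
          rw [hmoment]; push_cast; ring
      _ = ∑ p ∈ antidiagonal n, (2 * p.1 + 2) * c (p.1 + 1) * c p.2 := by
          simp only [Nat.sum_antidiagonal_succ, Nat.cast_zero, zero_mul, zero_add, mul_sum,
            Nat.cast_add, Nat.cast_one]
          exact sum_congr rfl fun p _ => by ring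
      _ = ∑ p ∈ antidiagonal n, ((2 * p.1 + 1) * c p.1) * c p.2 := by
          simp only [hc]
      _ = 2 * ∑ p ∈ antidiagonal n, (p.1 : ℝ) * (c p.1 * c p.2) + a n := by
          rw [ha, mul_sum, ← sum_add_distrib]
          exact sum_congr rfl fun p _ => by ring
      _ = (n + 1) * a n := by rw [hmoment]; ring
  induction n with
  | zero => simp [sq]
  | succ n ih => exact (hstep n).trans ih

lemma sum_antidiagonal_normCentralBinom_mul (n : ℕ) :
    ∑ p ∈ antidiagonal n, normCentralBinom p.1 * normCentralBinom p.2 = 1 := by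
  rw [sum_antidiagonal_mul_eq_sq mul_normCentralBinom_succ, normCentralBinom_zero,
    one_pow]

lemma eq_of_sum_antidiagonal_mul_self_eq {p q : ℕ → ℝ} (h0 : p 0 = q 0) (hp0 : p 0 ≠ 0)
    (h : ∀ n, ∑ x ∈ antidiagonal n, p x.1 * p x.2 = ∑ x ∈ antidiagonal n, q x.1 * q x.2) :
    p = q := by
  funext n
  induction n using Nat.strong_induction_on with
  | _ n ih =>
    rcases n with _ | m
    · exact h0
    have hm := h (m + 1)
    simp only [Nat.sum_antidiagonal_eq_sum_range_succ fun i j => p i * p j,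
      Nat.sum_antidiagonal_eq_sum_range_succ fun i j => q i * q j] at hm
    rw [sum_range_succ', sum_range_succ, sum_range_succ', sum_range_succ] at hm
    have hmid : ∑ k ∈ range m, p (k + 1) * p (m + 1 - (k + 1))
        = ∑ k ∈ range m, q (k + 1) * q (m + 1 - (k + 1)) :=
      sum_congr rfl fun k hk => by
        have := mem_range.mp hk
        rw [ih (k + 1) (by omega), ih (m + 1 - (k + 1)) (by omega)]
    simp only [hmid, Nat.sub_self, Nat.sub_zero, ← h0] at hm
    exact mul_left_cancel₀ (mul_ne_zero two_ne_zero hp0) (by linear_combination hm)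

lemma hasSum_normCentralBinom_mul_pow {s : ℝ} (hs0 : 0 ≤ s) (hs1 : s < 1) :
    HasSum (fun n => normCentralBinom n * s ^ n) (√(1 - s))⁻¹ := by
  have hnn : ∀ n, 0 ≤ normCentralBinom n * s ^ n :=
    fun n => mul_nonneg (normCentralBinom_nonneg n) (pow_nonneg hs0 n)
  have hsum : Summable fun n => normCentralBinom n * s ^ n :=
    (summable_geometric_of_lt_one hs0 hs1).of_nonneg_of_le hnn
      fun n => mul_le_of_le_one_left (pow_nonneg hs0 n) (normCentralBinom_le_one n)
  have hnorm : Summable fun n => ‖normCentralBinom n * s ^ n‖ := hsum.norm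
  have hsq : (∑' n, normCentralBinom n * s ^ n) ^ 2 = (1 - s)⁻¹ := by
    rw [sq, tsum_mul_tsum_eq_tsum_sum_antidiagonal_of_summable_norm hnorm hnorm,
      ← tsum_geometric_of_lt_one hs0 hs1]
    refine tsum_congr fun n => ?_
    calc ∑ p ∈ antidiagonal n, normCentralBinom p.1 * s ^ p.1 * (normCentralBinom p.2 * s ^ p.2)
        = ∑ p ∈ antidiagonal n, normCentralBinom p.1 * normCentralBinom p.2 * s ^ n :=
          sum_congr rfl fun p hp => by rw [← mem_antidiagonal.mp hp, pow_add]; ring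
      _ = s ^ n := by rw [← sum_mul, sum_antidiagonal_normCentralBinom_mul, one_mul]
  convert hsum.hasSum
  rw [← Real.sqrt_inv, ← hsq, Real.sqrt_sq (tsum_nonneg hnn)]

lemma hasSum_pow_succ_mul_sub {a : ℕ → ℝ} {s F : ℝ} (h : HasSum (fun n => a n * s ^ n) F) :
    HasSum (fun n => s ^ (n + 1) * (a n - a (n + 1))) (a 0 - (1 - s) * F) := by
  have hshift : HasSum (fun n => a (n + 1) * s ^ (n + 1)) (F - a 0) := by
    simpa using (hasSum_nat_add_iff' 1).mpr h
  have hterm : (fun n => s ^ (n + 1) * (a n - a (n + 1)))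
      = fun n => s * (a n * s ^ n) - a (n + 1) * s ^ (n + 1) := by
    ext n; ring
  rw [hterm, show a 0 - (1 - s) * F = s * F - (F - a 0) by ring]
  exact (h.mul_left s).sub hshift

lemma measurableSet_tau0Gt {m : MeasurableSpace Ω} {Y : ℕ → Ω → ℝ} {n : ℕ}
    (hY : ∀ i < n, Measurable (Y i)) : MeasurableSet (tau0Gt Y n) := by
  have : tau0Gt Y n = ⋂ k ∈ Set.Icc 1 n, {ω | 0 < S Y k ω} := by ext; simp [tau0Gt]
  rw [this]
  refine .biInter (Set.to_countable _) fun k hk => measurableSet_lt measurable_const ?_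
  exact Finset.measurable_sum _ fun i hi => hY i (by grind)

lemma S_add (X : ℕ → Ω → ℝ) (k m : ℕ) (ω : Ω) :
    S X (k + m) ω = S X k ω + S (fun i => X (k + i)) m ω :=
  sum_range_add _ k m

-- An injective extension of `i ↦ k - 1 - i` from `[0, k)`, so that reindexing preserves
-- independence.
def reflectBelow (k i : ℕ) : ℕ := if i < k then k - 1 - i else i

lemma reflectBelow_injective (k : ℕ) : Function.Injective (reflectBelow k) := by
  intro a b h
  unfold reflectBelow at h
  split_ifs at h <;> omega

lemma S_reflectBelow (X : ℕ → Ω → ℝ) {k m : ℕ} (hm : m ≤ k) (ω : Ω) :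
    S (fun i => X (reflectBelow k i)) m ω = S X k ω - S X (k - m) ω := by
  obtain ⟨l, rfl⟩ := Nat.exists_eq_add_of_le' hm
  rw [Nat.add_sub_cancel, S_add, add_sub_cancel_left, S, S, ← sum_range_reflect]
  refine sum_congr rfl fun i hi => ?_
  have := mem_range.mp hi
  rw [reflectBelow, if_pos (by omega)]
  congr 1
  omega

lemma tau0Gt_reflectBelow (X : ℕ → Ω → ℝ) (k : ℕ) :
    tau0Gt (fun i => X (reflectBelow k i)) k = {ω | ∀ j < k, S X j ω < S X k ω} := by
  ext ω
  simp only [tau0Gt, Set.mem_ofPred_eq]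
  constructor
  · intro h j hj
    have := h (k - j) (by omega) (by omega)
    rwa [S_reflectBelow X (by omega), Nat.sub_sub_self hj.le, sub_pos] at this
  · intro h m hm1 hmk
    rw [S_reflectBelow X hmk, sub_pos]
    exact h _ (by omega)

lemma tau0Gt_neg_shift (X : ℕ → Ω → ℝ) (k m : ℕ) :
    tau0Gt (fun i => -X (k + i)) m = {ω | ∀ j, k < j → j ≤ k + m → S X j ω < S X k ω} := by
  have hS : ∀ l ω, S (fun i => -X (k + i)) l ω = S X k ω - S X (k + l) ω := fun l ω => by
    rw [S_add]; simp [S]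
  ext ω
  simp only [tau0Gt, Set.mem_ofPred_eq, hS, sub_pos]
  constructor
  · intro h j hkj hjm
    simpa [Nat.add_sub_cancel' hkj.le] using h (j - k) (by omega) (by omega)
  · intro h l hl1 hlm
    exact h (k + l) (by omega) (by omega)

def strictArgmaxSet (X : ℕ → Ω → ℝ) (n k : ℕ) : Set Ω :=
  {ω | ∀ j ≤ n, j ≠ k → S X j ω < S X k ω}

lemma strictArgmaxSet_eq_inter (X : ℕ → Ω → ℝ) {n k : ℕ} (hk : k ≤ n) :
    strictArgmaxSet X n k
      = tau0Gt (fun i => X (reflectBelow k i)) k ∩ tau0Gt (fun i => -X (k + i)) (n - k) := by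
  rw [tau0Gt_reflectBelow, tau0Gt_neg_shift, Nat.add_sub_cancel' hk]
  ext ω
  simp only [strictArgmaxSet, Set.mem_inter_iff, Set.mem_ofPred_eq]
  constructor
  · intro h
    exact ⟨fun j hj => h j (by omega) (by omega), fun j hkj hjn => h j hjn (by omega)⟩
  · rintro ⟨hlt, hgt⟩ j hjn hjk
    rcases Nat.lt_or_gt_of_ne hjk with hj | hj
    exacts [hlt j hj, hgt j hj hjn]

lemma tau0Gt_eq_tau0Eq_succ_union (X : ℕ → Ω → ℝ) (n : ℕ) :
    tau0Gt X n = tau0Eq X (n + 1) ∪ tau0Gt X (n + 1) := by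
  ext ω
  simp only [tau0Gt, tau0Eq, Set.mem_union, Set.mem_ofPred_eq]
  constructor
  · intro h
    rcases le_or_gt (S X (n + 1) ω) 0 with hle | hlt
    · exact Or.inl ⟨hle, fun k h1 h2 => h k h1 (by omega)⟩
    · exact Or.inr fun k h1 h2 => (Nat.lt_or_eq_of_le h2).elim (fun h' => h k h1 (by omega))
        fun h' => h' ▸ hlt
  · rintro (⟨-, h⟩ | h) k h1 h2 <;> exact h k h1 (by omega)

section Probability

variable [MeasurableSpace Ω] {P : Measure Ω} {X : ℕ → Ω → ℝ}

lemma measure_tau0Gt_eq_infinitePi {μ : Measure ℝ} [IsProbabilityMeasure μ] {Y : ℕ → Ω → ℝ}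
    (hY : ∀ i, Measurable (Y i)) (hind : iIndepFun Y P) (hlaw : ∀ i, P.map (Y i) = μ)
    (n : ℕ) : P (tau0Gt Y n) = Measure.infinitePi (fun _ => μ) (tau0Gt (fun i y => y i) n) := by
  have hmap := hind.map_fun_eq_infinitePi_map hY
  simp only [hlaw] at hmap
  rw [← hmap, Measure.map_apply (measurable_pi_iff.mpr hY)
    (measurableSet_tau0Gt fun i _ => measurable_pi_apply i)]
  rfl

lemma measure_add_eq_zero_of_indepFun [IsFiniteMeasure P] {U V : Ω → ℝ} (hU : Measurable U)
    (hV : Measurable V) (hUV : IndepFun U V P) [NullSingletonClass (P.map U)] (c : ℝ) :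
    P {ω | U ω + V ω = c} = 0 := by
  have hE : MeasurableSet {p : ℝ × ℝ | p.1 + p.2 = c} :=
    measurableSet_eq_fun (measurable_fst.add measurable_snd) measurable_const
  have hfiber : ∀ y, (fun x => (x, y)) ⁻¹' {p : ℝ × ℝ | p.1 + p.2 = c} = {c - y} := fun y => by
    ext x; simp [eq_sub_iff_add_eq]
  rw [show {ω | U ω + V ω = c} = (fun ω => (U ω, V ω)) ⁻¹' {p : ℝ × ℝ | p.1 + p.2 = c} from rfl,
    ← Measure.map_apply (hU.prodMk hV) hE,
    (indepFun_iff_map_prod_eq_prod_map_map hU.aemeasurable hV.aemeasurable).mp hUV,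
    Measure.prod_apply_symm hE]
  simp [hfiber]

variable [IsProbabilityMeasure P]

lemma measure_S_eq_S_eq_zero (hmeas : ∀ i, Measurable (X i)) (hindep : iIndepFun X P)
    (hatom : ∀ i, NullSingletonClass (P.map (X i))) {j k : ℕ} (hjk : j < k) :
    P {ω | S X j ω = S X k ω} = 0 := by
  have hsplit : ∀ ω, S X k ω = S X j ω + (X j ω + ∑ i ∈ Ico (j + 1) k, X i ω) := fun ω => by
    rw [S, S, ← sum_range_add_sum_Ico _ hjk.le, sum_eq_sum_Ico_succ_bot hjk]
  have hind : IndepFun (X j) (∑ i ∈ Ico (j + 1) k, X i) P :=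
    (hindep.indepFun_finsetSum_of_notMem hmeas (by simp)).symm
  have := hatom j
  convert measure_add_eq_zero_of_indepFun (hmeas j) (by fun_prop) hind 0 using 2
  ext ω
  simp [hsplit, Finset.sum_apply]

lemma measure_strictArgmaxSet (hmeas : ∀ i, Measurable (X i)) (hindep : iIndepFun X P)
    (hident : ∀ i, IdentDistrib (X i) (X 0) P P)
    (hsym : P.map (X 0) = P.map (fun ω => -X 0 ω)) {n k : ℕ} (hk : k ≤ n) :
    P (strictArgmaxSet X n k) = P (tau0Gt X k) * P (tau0Gt X (n - k)) := by
  have := Measure.isProbabilityMeasure_map (μ := P) (hmeas 0).aemeasurable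
  have hlaw : ∀ i, P.map (X i) = P.map (X 0) := fun i => (hident i).map_eq
  have hlaw_neg : ∀ i, P.map (fun ω => -X i ω) = P.map (X 0) :=
    fun i => ((hident i).comp measurable_neg).map_eq.trans hsym.symm
  have hX := measure_tau0Gt_eq_infinitePi hmeas hindep hlaw
  have hreflect : P (tau0Gt (fun i => X (reflectBelow k i)) k) = P (tau0Gt X k) := by
    rw [hX, measure_tau0Gt_eq_infinitePi (fun i => hmeas _)
      (hindep.precomp (reflectBelow_injective k)) fun i => hlaw _]
  have hneg : P (tau0Gt (fun i => -X (k + i)) (n - k)) = P (tau0Gt X (n - k)) := by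
    rw [hX, measure_tau0Gt_eq_infinitePi (fun i => (hmeas _).neg)
      ((hindep.precomp (add_right_injective k)).comp (fun _ => Neg.neg) fun _ => measurable_neg)
      fun i => hlaw_neg _]
  set 𝓕 : ℕ → MeasurableSpace Ω := fun i => MeasurableSpace.comap (X i) inferInstance
  have hpast_future : Indep (⨆ i ∈ Set.Iio k, 𝓕 i) (⨆ i ∈ Set.Ici k, 𝓕 i) P :=
    indep_iSup_of_disjoint (fun i => (hmeas i).comap_le) ((iIndepFun_iff_iIndep _ _ _).mp hindep)
      (Set.Iio_disjoint_Ici le_rfl)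
  rw [strictArgmaxSet_eq_inter X hk, (Indep_iff _ _ _).mp hpast_future _ _ ?_ ?_, hreflect, hneg]
  · refine measurableSet_tau0Gt fun i hi => (comap_measurable (X _)).mono ?_ le_rfl
    refine le_iSup₂ (f := fun i _ => 𝓕 i) _ ?_
    simp only [reflectBelow, if_pos hi, Set.mem_Iio]
    omega
  · refine measurableSet_tau0Gt fun i _ => ((comap_measurable (X _)).mono ?_ le_rfl).neg
    exact le_iSup₂ (f := fun i _ => 𝓕 i) (k + i) (by simp)

lemma sum_measure_strictArgmaxSet (hmeas : ∀ i, Measurable (X i)) (hindep : iIndepFun X P)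
    (hatom : ∀ i, NullSingletonClass (P.map (X i))) (n : ℕ) :
    ∑ k ∈ range (n + 1), P (strictArgmaxSet X n k) = 1 := by
  have hmeasurableSet : ∀ k ∈ range (n + 1), MeasurableSet (strictArgmaxSet X n k) := by
    intro k hk
    rw [strictArgmaxSet_eq_inter X (mem_range_succ_iff.mp hk)]
    exact (measurableSet_tau0Gt fun i _ => hmeas _).inter
      (measurableSet_tau0Gt fun i _ => (hmeas _).neg)
  have hdisj : Set.PairwiseDisjoint ↑(range (n + 1)) (strictArgmaxSet X n) := by
    intro k hk l hl hkl
    refine Set.disjoint_left.mpr fun ω hωk hωl => lt_asymm (hωk l ?_ hkl.symm) (hωl k ?_ hkl)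
    exacts [mem_range_succ_iff.mp hl, mem_range_succ_iff.mp hk]
  have hties : P (⋃ j, ⋃ k, ⋃ (_ : j < k), {ω | S X j ω = S X k ω}) = 0 :=
    measure_iUnion_null fun j => measure_iUnion_null fun k => measure_iUnion_null fun hjk =>
      measure_S_eq_S_eq_zero hmeas hindep hatom hjk
  have hcover : (⋃ k ∈ range (n + 1), strictArgmaxSet X n k)ᶜ
      ⊆ ⋃ j, ⋃ k, ⋃ (_ : j < k), {ω | S X j ω = S X k ω} := by
    intro ω hω
    obtain ⟨k, hk, hmax⟩ :=
      exists_max_image (range (n + 1)) (fun j => S X j ω) nonempty_range_add_one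
    have hnot : ω ∉ strictArgmaxSet X n k := fun h => hω (Set.mem_biUnion hk h)
    simp only [strictArgmaxSet, Set.mem_ofPred_eq, not_forall, not_lt] at hnot
    obtain ⟨j, hjn, hjk, hle⟩ := hnot
    have heq : S X j ω = S X k ω := le_antisymm (hmax j (mem_range_succ_iff.mpr hjn)) hle
    simp only [Set.mem_iUnion]
    rcases Nat.lt_or_gt_of_ne hjk with h | h
    exacts [⟨j, k, h, heq⟩, ⟨k, j, h, heq.symm⟩]
  rw [← measure_biUnion_finset hdisj hmeasurableSet]
  exact (prob_compl_eq_zero_iff (Finset.measurableSet_biUnion _ hmeasurableSet)).mp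
    (measure_mono_null hcover hties)

theorem measure_tau0Gt_toReal (hmeas : ∀ i, Measurable (X i)) (hindep : iIndepFun X P)
    (hident : ∀ i, IdentDistrib (X i) (X 0) P P)
    (hsym : P.map (X 0) = P.map (fun ω => -X 0 ω))
    (hatomless : ∀ c : ℝ, P {ω | X 0 ω = c} = 0) (n : ℕ) :
    (P (tau0Gt X n)).toReal = normCentralBinom n := by
  have hatom : ∀ i, NullSingletonClass (P.map (X i)) := fun i => ⟨fun c => by
    rw [(hident i).map_eq, Measure.map_apply (hmeas 0) (measurableSet_singleton c)]
    exact hatomless c⟩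
  set q : ℕ → ℝ := fun n => (P (tau0Gt X n)).toReal with hq
  have htau0Gt_zero : tau0Gt X 0 = Set.univ := Set.eq_univ_of_forall fun _ _ _ _ => by omega
  have hq0 : q 0 = 1 := by simp [hq, htau0Gt_zero]
  have hconv : ∀ n, ∑ p ∈ antidiagonal n, q p.1 * q p.2 = 1 := by
    intro n
    have hsum := congrArg ENNReal.toReal (sum_measure_strictArgmaxSet hmeas hindep hatom n)
    rw [ENNReal.toReal_sum fun k _ => measure_ne_top _ _, ENNReal.toReal_one] at hsum
    rw [Nat.sum_antidiagonal_eq_sum_range_succ (fun i j => q i * q j), ← hsum]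
    refine sum_congr rfl fun k hk => ?_
    rw [measure_strictArgmaxSet hmeas hindep hident hsym (mem_range_succ_iff.mp hk),
      ENNReal.toReal_mul]
  have hq_eq : q = normCentralBinom :=
    eq_of_sum_antidiagonal_mul_self_eq (hq0.trans normCentralBinom_zero.symm) (by simp [hq0])
      fun n => (hconv n).trans (sum_antidiagonal_normCentralBinom_mul n).symm
  exact congrFun hq_eq n

lemma measure_tau0Eq_succ_toReal (hmeas : ∀ i, Measurable (X i)) (n : ℕ) :
    (P (tau0Eq X (n + 1))).toReal = (P (tau0Gt X n)).toReal - (P (tau0Gt X (n + 1))).toReal := by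
  have hdisj : Disjoint (tau0Eq X (n + 1)) (tau0Gt X (n + 1)) :=
    Set.disjoint_left.mpr fun ω h1 h2 => (h2 (n + 1) (by omega) le_rfl).not_ge h1.1
  rw [tau0Gt_eq_tau0Eq_succ_union, measure_union hdisj (measurableSet_tau0Gt fun i _ => hmeas i),
    ENNReal.toReal_add (measure_ne_top _ _) (measure_ne_top _ _)]
  ring

end Probability

/-- for a random walk with i.i.d. increments with symmetric atomless common
distribution: `E[s^{τ_0}] = 1 - √(1-s)` for `s ∈ [0,1)`, and consequently
`P(τ_0 > n) = C(2n,n)·2^{-2n}` for every `n ≥ 1`. -/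
theorem symmetric_atomless
    [MeasurableSpace Ω] (P : Measure Ω) [IsProbabilityMeasure P]
    (X : ℕ → Ω → ℝ)
    (hmeas : ∀ k, Measurable (X k))
    (hindep : iIndepFun X P)
    (hident : ∀ k, IdentDistrib (X k) (X 0) P P)
    (hsym : Measure.map (X 0) P = Measure.map (fun ω => -(X 0 ω)) P)
    (hatomless : ∀ c : ℝ, P {ω | X 0 ω = c} = 0) :
    (∀ s ∈ Set.Ico (0:ℝ) 1,
        ∑' n : ℕ, s ^ (n + 1) * (P (tau0Eq X (n + 1))).toReal = 1 - Real.sqrt (1 - s))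
    ∧ (∀ n : ℕ, 1 ≤ n →
        (P (tau0Gt X n)).toReal = (Nat.choose (2 * n) n : ℝ) * (1/2 : ℝ) ^ (2 * n)) := by
  have hsurvival := measure_tau0Gt_toReal hmeas hindep hident hsym hatomless
  refine ⟨fun s ⟨hs0, hs1⟩ => ?_, fun n _ => ?_⟩
  · have hgen := hasSum_pow_succ_mul_sub (hasSum_normCentralBinom_mul_pow hs0 hs1)
    rw [normCentralBinom_zero, ← div_eq_mul_inv, Real.div_sqrt] at hgen
    simp only [measure_tau0Eq_succ_toReal hmeas, hsurvival]
    exact hgen.tsum_eq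
  · rw [hsurvival, normCentralBinom, Nat.centralBinom_eq_two_mul_choose, pow_mul, div_eq_mul_inv,
      ← inv_pow]
    norm_num

end Stmt13
end

section
/- Let S(n)=X_1+⋯+X_n be a random walk with i.i.d. real-valued increments and τ_0 = inf{n≥1 : S(n) ≤ 0} (with s^{τ_0}:=0 on {τ_0=∞}). Then for every u∈(0,1): 1 − E[u^{τ_0}] = exp{ −∑_{n=1}^∞ (u^n/n)·P(S(n) ≤ 0) }. -/
/-!
Let `T_m` be the `m`-th weak descending ladder epoch of the walk (`T_0 = 0`, `T_1 = τ_0`). It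
suffices to work with the coordinate process on `ℕ → ℝ` under the product of copies of the law
of `X 0`.

* After `τ_0` the walk starts afresh, independently of its past, so
  `P(T_{m+1} = n) = ∑_{k+l=n} P(τ_0 = k) P(T_m = l)` and `E[u^{T_m}] = E[u^{τ_0}]^m`.
* Cycle lemma: if `S n ≤ 0`, the rotations of `(X 0, …, X (n-1))` having `n` as a ladder epoch
  all have the same number `r` of ladder epochs in `[1, n]`, and there are exactly `r` of them;
  if `S n > 0` there are none. Rotations preserve the law, so
  `P(S n ≤ 0) = n ∑_{m ≥ 1} P(T_m = n) / m`.

Hence `∑_n u^n P(S n ≤ 0) / n = ∑_m E[u^{T_m}] / m = ∑_m E[u^{τ_0}]^m / m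
= -log (1 - E[u^{τ_0}])`.
-/

open MeasureTheory ProbabilityTheory Filter

namespace Stmt14

variable {Ω : Type*}

/-- Partial sums of the increments: `S n = X 0 + ⋯ + X (n-1)`. -/
def S (X : ℕ → Ω → ℝ) (n : ℕ) (ω : Ω) : ℝ := ∑ k ∈ Finset.range n, X k ω

/-- The event `τ_0 = n`: the first time `k ≥ 1` with `S k ≤ 0` equals `n`. -/
def tau0Eq (X : ℕ → Ω → ℝ) (n : ℕ) : Set Ω :=
  {ω | S X n ω ≤ 0 ∧ ∀ k, 1 ≤ k → k < n → 0 < S X k ω}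

open Finset Function
open scoped ENNReal

def shift {α : Type*} (k : ℕ) (y : ℕ → α) : ℕ → α := fun i => y (k + i)

@[simp] lemma shift_zero {α : Type*} (y : ℕ → α) : shift 0 y = y := funext fun i => by simp [shift]

lemma measurable_shift {α : Type*} [MeasurableSpace α] (k : ℕ) :
    Measurable (shift k : (ℕ → α) → ℕ → α) :=
  measurable_pi_lambda _ fun i => measurable_pi_apply (k + i)

def partialSum (y : ℕ → ℝ) (k : ℕ) : ℝ := ∑ i ∈ range k, y i

def IsLadderEpoch (y : ℕ → ℝ) (k : ℕ) : Prop := ∀ j < k, partialSum y k ≤ partialSum y j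

noncomputable instance (y : ℕ → ℝ) : DecidablePred (IsLadderEpoch y) :=
  fun k => inferInstanceAs (Decidable (∀ j < k, _))

noncomputable def ladderCount (n : ℕ) (y : ℕ → ℝ) : ℕ := #{k ∈ Icc 1 n | IsLadderEpoch y k}

/-- The event `T_m = n`. -/
def ladderEq (m n : ℕ) : Set (ℕ → ℝ) := {y | IsLadderEpoch y n ∧ ladderCount n y = m}

def firstLadderEq (n : ℕ) : Set (ℕ → ℝ) :=
  {y | partialSum y n ≤ 0 ∧ ∀ k, 1 ≤ k → k < n → 0 < partialSum y k}

section Ladder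

variable {y : ℕ → ℝ} {j k n t : ℕ}

@[simp] lemma partialSum_zero : partialSum y 0 = 0 := sum_range_zero _

lemma partialSum_add (k j : ℕ) :
    partialSum y (k + j) = partialSum y k + partialSum (shift k y) j :=
  sum_range_add _ _ _

lemma dependsOn_partialSum (k : ℕ) : DependsOn (partialSum · k) (Set.Iio k) :=
  fun _ _ h => sum_congr rfl fun i hi => h i (mem_range.mp hi)

lemma isLadderEpoch_zero (y : ℕ → ℝ) : IsLadderEpoch y 0 := fun _ h => absurd h (Nat.not_lt_zero _)

lemma IsLadderEpoch.partialSum_nonpos (h : IsLadderEpoch y k) : partialSum y k ≤ 0 := by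
  rcases k.eq_zero_or_pos with rfl | hk
  · simp
  · simpa using h 0 hk

lemma isLadderEpoch_shift_iff :
    IsLadderEpoch (shift j y) k ↔ ∀ t < k, partialSum y (j + k) ≤ partialSum y (j + t) :=
  forall₂_congr fun t _ => by rw [partialSum_add, partialSum_add, add_le_add_iff_left]

lemma dependsOn_isLadderEpoch (hk : k ≤ n) : DependsOn (IsLadderEpoch · k) (Set.Iio n) := by
  intro y z h
  have hs : ∀ j ≤ k, partialSum y j = partialSum z j := fun j hj =>
    dependsOn_partialSum j fun i hi => h i (lt_of_lt_of_le hi (hj.trans hk))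
  exact propext (forall₂_congr fun j hj => by rw [hs k le_rfl, hs j hj.le])

lemma dependsOn_ladderCount (n : ℕ) : DependsOn (ladderCount n) (Set.Iio n) := fun _ _ h =>
  congrArg card (filter_congr fun _ hk => (dependsOn_isLadderEpoch (mem_Icc.mp hk).2 h).to_iff)

@[simp] lemma ladderCount_zero : ladderCount 0 y = 0 := by simp [ladderCount]

lemma ladderCount_pos (hn : 1 ≤ n) (h : IsLadderEpoch y n) : 0 < ladderCount n y :=
  card_pos.mpr ⟨n, mem_filter.mpr ⟨mem_Icc.mpr ⟨hn, le_rfl⟩, h⟩⟩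

lemma dependsOn_mem_firstLadderEq (n : ℕ) : DependsOn (· ∈ firstLadderEq n) (Set.Iio n) := by
  intro y z h
  have hs : ∀ k ≤ n, partialSum y k = partialSum z k := fun k hk =>
    dependsOn_partialSum k fun i hi => h i (lt_of_lt_of_le hi hk)
  simp only [firstLadderEq, Set.mem_ofPred_eq]
  rw [hs n le_rfl]
  exact propext (and_congr_right fun _ => forall₃_congr fun k _ hk => by rw [hs k hk.le])

lemma isLadderEpoch_of_mem_firstLadderEq (hy : y ∈ firstLadderEq k) : IsLadderEpoch y k := by
  intro j hj
  rcases j.eq_zero_or_pos with rfl | hj0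
  · simpa using hy.1
  · exact hy.1.trans (hy.2 j hj0 hj).le

lemma not_isLadderEpoch_of_mem_firstLadderEq (hy : y ∈ firstLadderEq k) (ht : 1 ≤ t)
    (htk : t < k) : ¬ IsLadderEpoch y t :=
  fun h => (hy.2 t ht htk).not_ge h.partialSum_nonpos

lemma exists_mem_firstLadderEq (hn : 1 ≤ n) (h : partialSum y n ≤ 0) :
    ∃ k ∈ Icc 1 n, y ∈ firstLadderEq k := by
  classical
  have hex : ∃ k, 1 ≤ k ∧ partialSum y k ≤ 0 := ⟨n, hn, h⟩
  obtain ⟨hk1, hk⟩ := Nat.find_spec hex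
  refine ⟨Nat.find hex, mem_Icc.mpr ⟨hk1, Nat.find_min' hex ⟨hn, h⟩⟩, hk, fun j hj1 hj => ?_⟩
  exact lt_of_not_ge fun hj' => Nat.find_min hex hj ⟨hj1, hj'⟩

lemma eq_of_mem_firstLadderEq {l : ℕ} (hk : 1 ≤ k) (hl : 1 ≤ l) (hyk : y ∈ firstLadderEq k)
    (hyl : y ∈ firstLadderEq l) : k = l := by
  by_contra hne
  rcases Nat.lt_or_gt_of_ne hne with h | h
  · exact (hyl.2 k hk h).not_ge hyk.1
  · exact (hyk.2 l hl h).not_ge hyl.1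

lemma isLadderEpoch_iff_shift (hy : y ∈ firstLadderEq k) (hkt : k ≤ t) :
    IsLadderEpoch y t ↔ IsLadderEpoch (shift k y) (t - k) := by
  obtain ⟨t, rfl⟩ := Nat.exists_eq_add_of_le hkt
  rw [Nat.add_sub_cancel_left, isLadderEpoch_shift_iff]
  refine ⟨fun h s hs => h (k + s) (by omega), fun h j hj => ?_⟩
  by_cases hkj : k ≤ j
  · obtain ⟨s, rfl⟩ := Nat.exists_eq_add_of_le hkj
    exact h s (by omega)
  · have hkt : partialSum y (k + t) ≤ partialSum y k := by
      rcases t.eq_zero_or_pos with rfl | ht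
      · simp
      · simpa using h 0 ht
    exact hkt.trans (isLadderEpoch_of_mem_firstLadderEq hy j (by omega))

lemma ladderCount_eq_succ (hy : y ∈ firstLadderEq k) (hk : 1 ≤ k) (hkn : k ≤ n) :
    ladderCount n y = ladderCount (n - k) (shift k y) + 1 := by
  have hsplit : {t ∈ Icc 1 n | IsLadderEpoch y t} =
      insert k ({s ∈ Icc 1 (n - k) | IsLadderEpoch (shift k y) s}.map (addRightEmbedding k)) := by
    ext t
    simp only [mem_insert, Finset.mem_map, mem_filter, mem_Icc, addRightEmbedding_apply]
    constructor
    · rintro ⟨⟨ht1, htn⟩, he⟩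
      rcases lt_trichotomy t k with htk | rfl | hkt
      · exact absurd he (not_isLadderEpoch_of_mem_firstLadderEq hy ht1 htk)
      · exact Or.inl rfl
      · exact Or.inr ⟨t - k, ⟨⟨by omega, by omega⟩, (isLadderEpoch_iff_shift hy hkt.le).mp he⟩,
          by omega⟩
    · rintro (rfl | ⟨s, ⟨⟨hs1, hsn⟩, he⟩, rfl⟩)
      · exact ⟨⟨hk, hkn⟩, isLadderEpoch_of_mem_firstLadderEq hy⟩
      · refine ⟨⟨by omega, by omega⟩, (isLadderEpoch_iff_shift hy (by omega)).mpr ?_⟩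
        rwa [Nat.add_sub_cancel]
  rw [ladderCount, hsplit, card_insert_of_notMem (by simp), card_map, ladderCount]

lemma mem_ladderEq_zero : y ∈ ladderEq 0 n ↔ n = 0 := by
  refine ⟨fun ⟨he, hc⟩ => ?_, fun hn => ⟨hn ▸ isLadderEpoch_zero y, by simp [hn]⟩⟩
  by_contra hn
  exact (ladderCount_pos (Nat.one_le_iff_ne_zero.mpr hn) he).ne' hc

lemma ladderEq_succ (m n : ℕ) :
    ladderEq (m + 1) n = ⋃ k ∈ Icc 1 n, firstLadderEq k ∩ shift k ⁻¹' ladderEq m (n - k) := by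
  ext y
  simp only [Set.mem_iUnion, Set.mem_inter_iff, Set.mem_preimage, ladderEq, Set.mem_ofPred_eq,
    exists_prop]
  constructor
  · rintro ⟨he, hc⟩
    have hn : 1 ≤ n := Nat.one_le_iff_ne_zero.mpr fun hn => by simp [hn] at hc
    obtain ⟨k, hk, hy⟩ := exists_mem_firstLadderEq hn he.partialSum_nonpos
    have hkn := mem_Icc.mp hk
    refine ⟨k, hk, hy, (isLadderEpoch_iff_shift hy hkn.2).mp he, ?_⟩
    have := ladderCount_eq_succ hy hkn.1 hkn.2
    omega
  · rintro ⟨k, hk, hy, he, hc⟩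
    exact ⟨(isLadderEpoch_iff_shift hy (mem_Icc.mp hk).2).mpr he,
      by rw [ladderCount_eq_succ hy (mem_Icc.mp hk).1 (mem_Icc.mp hk).2, hc]⟩

lemma ladderEq_one (hn : 1 ≤ n) : ladderEq 1 n = firstLadderEq n := by
  ext y
  simp only [ladderEq_succ, Set.mem_iUnion, Set.mem_inter_iff, Set.mem_preimage, mem_ladderEq_zero,
    mem_Icc, exists_prop]
  refine ⟨fun ⟨k, hk, hy, h0⟩ => ?_, fun hy => ⟨n, ⟨hn, le_rfl⟩, hy, Nat.sub_self n⟩⟩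
  rwa [show n = k by omega]

@[simp] lemma ladderEq_succ_zero (m : ℕ) : ladderEq (m + 1) 0 = ∅ := by simp [ladderEq_succ]

end Ladder

lemma sum_range_add_of_periodic {M : Type*} [AddCancelCommMonoid M] {g : ℕ → M} {n : ℕ}
    (hg : Periodic g n) (c : ℕ) : ∑ k ∈ range n, g (c + k) = ∑ k ∈ range n, g k := by
  induction c with
  | zero => simp
  | succ c ih =>
    rw [← ih]
    have h := (sum_range_succ (fun k => g (c + k)) n).symm.trans (sum_range_succ' _ n)
    rw [add_zero, hg c, add_left_inj] at h
    exact (sum_congr rfl fun k _ => by rw [add_assoc, add_comm 1 k]).trans h.symm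

section Cycle

/-- Meaningful for `n ≠ 0` only: `ladderWeight 0 y = 0⁻¹ = ∞`. -/
noncomputable def ladderWeight (n : ℕ) (y : ℕ → ℝ) : ℝ≥0∞ :=
  if IsLadderEpoch y n then (ladderCount n y : ℝ≥0∞)⁻¹ else 0

lemma dependsOn_ladderWeight (n : ℕ) : DependsOn (ladderWeight n) (Set.Iio n) := by
  intro y z h
  simp only [ladderWeight, dependsOn_isLadderEpoch le_rfl h, dependsOn_ladderCount n h]

variable {n j k : ℕ} {p : ℕ → ℝ}

lemma shift_add_period (hp : Periodic p n) (j : ℕ) : shift (j + n) p = shift j p :=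
  funext fun i => by simp only [shift, add_right_comm j n i, hp (j + i)]

lemma partialSum_add_period (hp : Periodic p n) (m : ℕ) :
    partialSum p (m + n) = partialSum p m + partialSum p n := by
  rw [add_comm m, partialSum_add, ← zero_add n, shift_add_period hp, shift_zero, add_comm]

lemma isLadderEpoch_shift_iff_of_periodic (hp : Periodic p n) (hj : IsLadderEpoch (shift j p) n)
    (hk : k ≤ n) : IsLadderEpoch (shift j p) k ↔ IsLadderEpoch (shift (j + k) p) n := by
  rw [isLadderEpoch_shift_iff] at hj
  rw [isLadderEpoch_shift_iff, isLadderEpoch_shift_iff]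
  have hP := partialSum_add_period hp
  rw [hP] at hj ⊢
  constructor
  · intro h t ht
    by_cases hkt : k + t < n
    · have hjk : partialSum p (j + k) ≤ partialSum p j := by
        rcases k.eq_zero_or_pos with rfl | hk0
        · simp
        · simpa using h 0 hk0
      have := hj (k + t) hkt
      rw [← add_assoc] at this
      linarith
    · have := h (k + t - n) (by omega)
      rw [show j + k + t = j + (k + t - n) + n by omega, hP]
      linarith
  · intro h t ht
    have := h (n - k + t) (by omega)
    rw [show j + k + (n - k + t) = j + t + n by omega, hP] at this
    linarith

lemma exists_isLadderEpoch_shift_of_periodic (hp : Periodic p n) (hn : 0 < n)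
    (hs : partialSum p n ≤ 0) : ∃ j < n, IsLadderEpoch (shift j p) n := by
  obtain ⟨j, hj, hmin⟩ := exists_min_image (range n) (partialSum p) ⟨0, mem_range.mpr hn⟩
  have hjn := mem_range.mp hj
  refine ⟨j, hjn, isLadderEpoch_shift_iff.mpr fun t ht => ?_⟩
  rw [partialSum_add_period hp]
  by_cases hjt : j + t < n
  · linarith [hmin (j + t) (mem_range.mpr hjt)]
  · rw [show j + t = j + t - n + n by omega, partialSum_add_period hp]
    linarith [hmin (j + t - n) (mem_range.mpr (by omega))]

lemma partialSum_shift_of_periodic (hp : Periodic p n) (j : ℕ) :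
    partialSum (shift j p) n = partialSum p n := by
  have := partialSum_add (y := p) j n
  rw [partialSum_add_period hp] at this
  linarith

lemma ladderCount_shift_of_periodic (hp : Periodic p n) (hj : IsLadderEpoch (shift j p) n) :
    ladderCount n (shift j p) = #{i ∈ range n | IsLadderEpoch (shift i p) n} := by
  rw [ladderCount, filter_congr fun k hk =>
    isLadderEpoch_shift_iff_of_periodic hp hj (mem_Icc.mp hk).2, card_filter, card_filter,
    ← Ico_add_one_right_eq_Icc, sum_Ico_eq_sum_range, Nat.add_sub_cancel]
  simp only [← add_assoc]
  exact sum_range_add_of_periodic (n := n)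
    (g := fun i => if IsLadderEpoch (shift i p) n then 1 else 0)
    (fun i => by simp only [shift_add_period hp]) (j + 1)

/-- The rotations having `n` as a ladder epoch all have as many ladder epochs in `[1, n]` as
there are such rotations, and there is one (starting at a minimum of the partial sums) as soon
as `partialSum p n ≤ 0`. -/
lemma sum_ladderWeight_shift_of_periodic (hp : Periodic p n) (hn : 0 < n) :
    ∑ j ∈ range n, ladderWeight n (shift j p) = if partialSum p n ≤ 0 then 1 else 0 := by
  have hw : ∀ j ∈ range n, ladderWeight n (shift j p) = if IsLadderEpoch (shift j p) n then
      (#{i ∈ range n | IsLadderEpoch (shift i p) n} : ℝ≥0∞)⁻¹ else 0 := by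
    intro j _
    unfold ladderWeight
    split_ifs with h
    · rw [ladderCount_shift_of_periodic hp h]
    · rfl
  rw [sum_congr rfl hw, sum_ite, sum_const_zero, add_zero, sum_const, nsmul_eq_mul]
  split_ifs with hs
  · obtain ⟨j, hjn, hj⟩ := exists_isLadderEpoch_shift_of_periodic hp hn hs
    refine ENNReal.mul_inv_cancel ?_ (ENNReal.natCast_ne_top _)
    exact Nat.cast_ne_zero.mpr (card_ne_zero_of_mem (mem_filter.mpr ⟨mem_range.mpr hjn, hj⟩))
  · rw [filter_false_of_mem fun j _ hj =>
      hs (partialSum_shift_of_periodic hp j ▸ hj.partialSum_nonpos)]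
    simp

/-- Rotation by `j` of the first `n` coordinates; being the identity beyond `n` makes it
injective, hence it preserves product measures. -/
def cycle (n j i : ℕ) : ℕ := if i < n then (j + i) % n else i

lemma cycle_injective (n j : ℕ) : Injective (cycle n j) := by
  intro a b h
  unfold cycle at h
  split_ifs at h with ha hb hb
  · have := Nat.ModEq.add_left_cancel' j h
    rwa [Nat.ModEq, Nat.mod_eq_of_lt ha, Nat.mod_eq_of_lt hb] at this
  · have := Nat.mod_lt (j + a) (by omega : 0 < n)
    omega
  · have := Nat.mod_lt (j + b) (by omega : 0 < n)
    omega
  · exact h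

lemma sum_ladderWeight_cycle (hn : 0 < n) (y : ℕ → ℝ) :
    ∑ j ∈ range n, ladderWeight n (fun i => y (cycle n j i))
      = {z | partialSum z n ≤ 0}.indicator 1 y := by
  set p : ℕ → ℝ := fun i => y (i % n)
  have hp : Periodic p n := fun i => by simp [p]
  have hcycle : ∀ j, ∀ i ∈ Set.Iio n, y (cycle n j i) = shift j p i := fun j i hi => by
    simp [cycle, shift, p, show i < n from hi]
  have hs : partialSum p n = partialSum y n :=
    dependsOn_partialSum n fun i hi => by simp [p, Nat.mod_eq_of_lt (show i < n from hi)]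
  rw [sum_congr rfl fun j _ => dependsOn_ladderWeight n (hcycle j),
    sum_ladderWeight_shift_of_periodic hp hn, hs]
  simp [Set.indicator]

end Cycle

lemma measurable_partialSum (k : ℕ) : Measurable (partialSum · k) :=
  Finset.measurable_sum _ fun i _ => measurable_pi_apply i

lemma measurableSet_isLadderEpoch (k : ℕ) : MeasurableSet {y | IsLadderEpoch y k} := by
  simp only [IsLadderEpoch, Set.ofPred_forall]
  exact .iInter fun j => .iInter fun _ =>
    measurableSet_le (measurable_partialSum k) (measurable_partialSum j)

lemma measurable_ladderCount (n : ℕ) : Measurable (ladderCount n) := by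
  have : ladderCount n = fun y => ∑ k ∈ Icc 1 n, if IsLadderEpoch y k then 1 else 0 :=
    funext fun y => card_filter _ _
  rw [this]
  exact Finset.measurable_sum _ fun k _ =>
    Measurable.ite (measurableSet_isLadderEpoch k) measurable_const measurable_const

lemma measurableSet_ladderEq (m n : ℕ) : MeasurableSet (ladderEq m n) :=
  (measurableSet_isLadderEpoch n).inter (measurable_ladderCount n (measurableSet_singleton m))

lemma measurableSet_firstLadderEq (n : ℕ) : MeasurableSet (firstLadderEq n) := by
  simp only [firstLadderEq, Set.ofPred_and, Set.ofPred_forall]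
  exact (measurableSet_le (measurable_partialSum n) measurable_const).inter
    (.iInter fun k => .iInter fun _ => .iInter fun _ =>
      measurableSet_lt measurable_const (measurable_partialSum k))

lemma measurable_ladderWeight (n : ℕ) : Measurable (ladderWeight n) :=
  Measurable.ite (measurableSet_isLadderEpoch n)
    ((measurable_from_nat (f := fun c : ℕ => (c : ℝ≥0∞)⁻¹)).comp (measurable_ladderCount n))
    measurable_const

lemma ladderWeight_eq_tsum {n : ℕ} (hn : n ≠ 0) (y : ℕ → ℝ) :
    ladderWeight n y = ∑' m : ℕ, ((m : ℝ≥0∞) + 1)⁻¹ * (ladderEq (m + 1) n).indicator 1 y := by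
  unfold ladderWeight
  split_ifs with h
  · obtain ⟨c, hc⟩ := Nat.exists_eq_add_one_of_ne_zero
      (ladderCount_pos (Nat.one_le_iff_ne_zero.mpr hn) h).ne'
    rw [tsum_eq_single c fun m hm => by simp [ladderEq, hc, Ne.symm hm]]
    simp [ladderEq, h, hc]
  · simp [ladderEq, h]

lemma lintegral_ladderWeight (μ : Measure (ℕ → ℝ)) {n : ℕ} (hn : n ≠ 0) :
    ∫⁻ y, ladderWeight n y ∂μ = ∑' m : ℕ, ((m : ℝ≥0∞) + 1)⁻¹ * μ (ladderEq (m + 1) n) := by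
  have hind : ∀ m : ℕ, Measurable ((ladderEq (m + 1) n).indicator (1 : (ℕ → ℝ) → ℝ≥0∞)) :=
    fun m => measurable_one.indicator (measurableSet_ladderEq _ _)
  simp_rw [ladderWeight_eq_tsum hn]
  rw [lintegral_tsum fun m => ((hind m).const_mul _).aemeasurable]
  refine tsum_congr fun m => ?_
  rw [lintegral_const_mul _ (hind m), lintegral_indicator_one (measurableSet_ladderEq _ _)]

lemma tsum_pow_mul_ladderEq_one (μ : Measure (ℕ → ℝ)) (x : ℝ≥0∞) :
    ∑' n, x ^ n * μ (ladderEq 1 n) = ∑' n : ℕ, x ^ (n + 1) * μ (firstLadderEq (n + 1)) := by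
  rw [tsum_eq_zero_add' ENNReal.summable]
  simp [ladderEq_one]

lemma infinitePi_inter_shift_preimage {α : Type*} [MeasurableSpace α] (ν : Measure α)
    [IsProbabilityMeasure ν] {k : ℕ} {A B : Set (ℕ → α)} (hA : MeasurableSet A)
    (hAk : DependsOn (· ∈ A) (Set.Iio k)) (hB : MeasurableSet B) :
    Measure.infinitePi (fun _ => ν) (A ∩ shift k ⁻¹' B)
      = Measure.infinitePi (fun _ => ν) A * Measure.infinitePi (fun _ => ν) B := by
  let m : ℕ → MeasurableSpace (ℕ → α) := fun i => .comap (fun y => y i) inferInstance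
  have hindep : iIndep m (Measure.infinitePi fun _ => ν) :=
    (iIndepFun_iff_iIndep _ _ _).mp
      (iIndepFun_infinitePi (X := fun _ a => a) fun _ => measurable_id)
  have hsplit := indep_iSup_of_disjoint (fun i => (measurable_pi_apply i).comap_le) hindep
    (Set.Iio_disjoint_Ici le_rfl : Disjoint (Set.Iio k) (Set.Ici k))
  have hcoord : ∀ {S : Set ℕ}, ∀ i ∈ S, Measurable[⨆ i ∈ S, m i] fun y : ℕ → α => y i :=
    fun i hi => (comap_measurable _).mono (le_iSup₂ (f := fun i _ => m i) i hi) le_rfl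
  have hpi : ∀ {S : Set ℕ} (g : (ℕ → α) → ℕ → α), (∀ i, Measurable[⨆ i ∈ S, m i] fun y => g y i) →
      Measurable[⨆ i ∈ S, m i] g := fun g hg => @measurable_pi_lambda _ _ _ (⨆ i ∈ _, m i) _ g hg
  obtain ⟨a⟩ := nonempty_of_isProbabilityMeasure ν
  -- `A` only reads the coordinates `< k`, so it is its own preimage under a map reading only them
  have hApast : MeasurableSet[⨆ i ∈ Set.Iio k, m i] A := by
    have hA' : A = (fun y i => if i < k then y i else a) ⁻¹' A :=
      Set.ext fun y => (hAk fun i hi => by simp [show i < k from hi]).to_iff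
    rw [hA']
    refine (hpi _ fun i => ?_) hA
    split_ifs with hi
    · exact hcoord i hi
    · exact measurable_const
  have hBfuture : MeasurableSet[⨆ i ∈ Set.Ici k, m i] (shift k ⁻¹' B) :=
    (hpi _ fun i => hcoord (k + i) (by simp)) hB
  have hshift : (Measure.infinitePi fun _ => ν).map (shift k) = Measure.infinitePi fun _ => ν :=
    Measure.map_infinitePi_infinitePi_of_inj (add_right_injective k)
  rw [(Indep_iff _ _ _).mp hsplit _ _ hApast hBfuture, ← Measure.map_apply (measurable_shift k) hB,
    hshift]

protected lemma ENNReal.tsum_mul_tsum_eq_tsum_sum_antidiagonal (f g : ℕ → ℝ≥0∞) :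
    (∑' n, f n) * (∑' n, g n) = ∑' n, ∑ p ∈ antidiagonal n, f p.1 * g p.2 := by
  simp_rw [← ENNReal.tsum_mul_right, ← ENNReal.tsum_mul_left]
  rw [← ENNReal.tsum_prod, ← HasAntidiagonal.sigmaAntidiagonalEquivProd.tsum_eq,
    ENNReal.tsum_sigma']
  exact tsum_congr fun n => Finset.tsum_subtype (antidiagonal n) fun p => f p.1 * g p.2

lemma tsum_pow_mul_eq_pow_of_antidiagonal (q : ℕ → ℕ → ℝ≥0∞)
    (hzero : ∀ n, q 0 n = if n = 0 then 1 else 0)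
    (hsucc : ∀ m n, q (m + 1) n = ∑ p ∈ antidiagonal n, q 1 p.1 * q m p.2) (x : ℝ≥0∞) (m : ℕ) :
    ∑' n, x ^ n * q m n = (∑' n, x ^ n * q 1 n) ^ m := by
  induction m with
  | zero => simp [hzero]
  | succ m ih =>
    rw [pow_succ', ← ih, ENNReal.tsum_mul_tsum_eq_tsum_sum_antidiagonal]
    refine tsum_congr fun n => ?_
    rw [hsucc, mul_sum]
    refine sum_congr rfl fun p hp => ?_
    rw [← mem_antidiagonal.mp hp, pow_add]
    ring

lemma tsum_ofReal_pow_div_eq_neg_log {x : ℝ} (hx0 : 0 ≤ x) (hx1 : x < 1) :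
    ∑' m : ℕ, ENNReal.ofReal x ^ (m + 1) / (m + 1) = ENNReal.ofReal (-Real.log (1 - x)) := by
  have h := Real.hasSum_pow_div_log_of_abs_lt_one (abs_lt.mpr ⟨by linarith, hx1⟩)
  rw [← h.tsum_eq, ENNReal.ofReal_tsum_of_nonneg (fun m => by positivity) h.summable]
  refine tsum_congr fun m => ?_
  rw [ENNReal.ofReal_div_of_pos (by positivity), ENNReal.ofReal_pow hx0]
  norm_cast

section IID

variable (ν : Measure ℝ) [IsProbabilityMeasure ν]

lemma infinitePi_ladderEq_zero (n : ℕ) :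
    Measure.infinitePi (fun _ => ν) (ladderEq 0 n) = if n = 0 then 1 else 0 := by
  have : ladderEq 0 n = {_y | n = 0} := Set.ext fun _ => mem_ladderEq_zero
  rw [this]
  split_ifs with hn <;> simp [hn]

lemma infinitePi_ladderEq_succ (m n : ℕ) :
    Measure.infinitePi (fun _ => ν) (ladderEq (m + 1) n) = ∑ p ∈ antidiagonal n,
      Measure.infinitePi (fun _ => ν) (ladderEq 1 p.1)
        * Measure.infinitePi (fun _ => ν) (ladderEq m p.2) := by
  have hdisj : Set.PairwiseDisjoint ↑(Icc 1 n)
      fun k => firstLadderEq k ∩ shift k ⁻¹' ladderEq m (n - k) := fun k hk l hl hkl =>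
    Set.disjoint_left.mpr fun y hyk hyl =>
      hkl (eq_of_mem_firstLadderEq (mem_Icc.mp hk).1 (mem_Icc.mp hl).1 hyk.1 hyl.1)
  rw [ladderEq_succ, measure_biUnion_finset hdisj fun k _ => (measurableSet_firstLadderEq k).inter
      (measurable_shift k (measurableSet_ladderEq _ _)),
    Nat.sum_antidiagonal_eq_sum_range_succ
      (fun k l => Measure.infinitePi (fun _ => ν) (ladderEq 1 k)
        * Measure.infinitePi (fun _ => ν) (ladderEq m l)),
    sum_range_succ', ← Ico_add_one_right_eq_Icc, sum_Ico_eq_sum_range, Nat.add_sub_cancel]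
  simp only [ladderEq_succ_zero, measure_empty, zero_mul, add_zero]
  refine sum_congr rfl fun k _ => ?_
  rw [infinitePi_inter_shift_preimage ν (measurableSet_firstLadderEq _)
    (dependsOn_mem_firstLadderEq _) (measurableSet_ladderEq _ _), add_comm 1 k,
    ladderEq_one (Nat.le_add_left 1 k)]

lemma infinitePi_partialSum_nonpos {n : ℕ} (hn : n ≠ 0) :
    Measure.infinitePi (fun _ => ν) {y | partialSum y n ≤ 0}
      = n * ∑' m : ℕ,
          ((m : ℝ≥0∞) + 1)⁻¹ * Measure.infinitePi (fun _ => ν) (ladderEq (m + 1) n) := by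
  set μ := Measure.infinitePi fun _ : ℕ => ν
  have hcycle : ∀ j, Measurable fun (y : ℕ → ℝ) i => y (cycle n j i) := fun j =>
    measurable_pi_lambda _ fun i => measurable_pi_apply _
  calc μ {y | partialSum y n ≤ 0}
      = ∫⁻ y, {y | partialSum y n ≤ 0}.indicator 1 y ∂μ :=
        (lintegral_indicator_one (measurableSet_le (measurable_partialSum n) measurable_const)).symm
    _ = ∑ j ∈ range n, ∫⁻ y, ladderWeight n (fun i => y (cycle n j i)) ∂μ := by
        simp_rw [← sum_ladderWeight_cycle (Nat.pos_of_ne_zero hn)]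
        exact lintegral_finsetSum _ fun j _ => (measurable_ladderWeight n).comp (hcycle j)
    _ = ∑ j ∈ range n, ∫⁻ y, ladderWeight n y ∂μ := by
        refine sum_congr rfl fun j _ => ?_
        rw [← lintegral_map (measurable_ladderWeight n) (hcycle j),
          Measure.map_infinitePi_infinitePi_of_inj (cycle_injective n j)]
    _ = n * ∑' m : ℕ, ((m : ℝ≥0∞) + 1)⁻¹ * μ (ladderEq (m + 1) n) := by
        rw [sum_const, card_range, nsmul_eq_mul, lintegral_ladderWeight _ hn]

theorem tsum_pow_div_mul_infinitePi_partialSum_nonpos (x : ℝ≥0∞) :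
    ∑' n : ℕ, x ^ (n + 1) / (n + 1) * Measure.infinitePi (fun _ => ν) {y | partialSum y (n + 1) ≤ 0}
      = ∑' m : ℕ, (∑' n, x ^ n * Measure.infinitePi (fun _ => ν) (ladderEq 1 n)) ^ (m + 1)
          / (m + 1) := by
  set μ := Measure.infinitePi fun _ : ℕ => ν
  have hgen := tsum_pow_mul_eq_pow_of_antidiagonal (fun m n => μ (ladderEq m n))
    (infinitePi_ladderEq_zero ν) (infinitePi_ladderEq_succ ν) x
  calc ∑' n : ℕ, x ^ (n + 1) / (n + 1) * μ {y | partialSum y (n + 1) ≤ 0}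
      = ∑' n : ℕ, ∑' m : ℕ, ((m : ℝ≥0∞) + 1)⁻¹ * (x ^ (n + 1) * μ (ladderEq (m + 1) (n + 1))) := by
        refine tsum_congr fun n => ?_
        rw [infinitePi_partialSum_nonpos ν n.succ_ne_zero, ← mul_assoc, Nat.cast_succ,
          ENNReal.div_mul_cancel (by simp) (by simp), ← ENNReal.tsum_mul_left]
        exact tsum_congr fun m => mul_left_comm _ _ _
    _ = ∑' m : ℕ, ((m : ℝ≥0∞) + 1)⁻¹ * ∑' n : ℕ, x ^ (n + 1) * μ (ladderEq (m + 1) (n + 1)) := by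
        rw [ENNReal.tsum_comm]
        simp_rw [ENNReal.tsum_mul_left]
    _ = _ := by
        refine tsum_congr fun m => ?_
        rw [← hgen (m + 1), tsum_eq_zero_add' (f := fun n => x ^ n * μ (ladderEq (m + 1) n))
          ENNReal.summable, div_eq_mul_inv, mul_comm]
        simp

lemma tsum_pow_mul_infinitePi_ladderEq_one_lt_one {x : ℝ≥0∞} (hx : x < 1) :
    ∑' n, x ^ n * Measure.infinitePi (fun _ => ν) (ladderEq 1 n) < 1 := by
  set μ := Measure.infinitePi fun _ : ℕ => ν
  have hdisj : Pairwise (Disjoint on fun n : ℕ => firstLadderEq (n + 1)) := fun k l hkl =>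
    Set.disjoint_left.mpr fun y hk hl =>
      hkl (Nat.succ_injective (eq_of_mem_firstLadderEq k.succ_pos l.succ_pos hk hl))
  have hsum : ∑' n : ℕ, μ (firstLadderEq (n + 1)) ≤ 1 := by
    rw [← measure_iUnion hdisj fun n => measurableSet_firstLadderEq _]
    exact prob_le_one
  calc ∑' n, x ^ n * μ (ladderEq 1 n)
      = ∑' n : ℕ, x ^ (n + 1) * μ (firstLadderEq (n + 1)) :=
        tsum_pow_mul_ladderEq_one μ x
    _ ≤ ∑' n : ℕ, x * μ (firstLadderEq (n + 1)) := by
        gcongr with n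
        exact pow_le_of_le_one (by positivity) hx.le n.succ_ne_zero
    _ ≤ x := by
        rw [ENNReal.tsum_mul_left]
        exact mul_le_of_le_one_right' hsum
    _ < 1 := hx

theorem spitzer_infinitePi {u : ℝ} (hu : u ∈ Set.Ioo (0 : ℝ) 1) :
    1 - ∑' n : ℕ, u ^ (n + 1) * (Measure.infinitePi (fun _ => ν) (firstLadderEq (n + 1))).toReal
      = Real.exp (-∑' n : ℕ, u ^ (n + 1) / (n + 1)
          * (Measure.infinitePi (fun _ => ν) {y | partialSum y (n + 1) ≤ 0}).toReal) := by
  set μ := Measure.infinitePi fun _ : ℕ => ν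
  set G := ∑' n, ENNReal.ofReal u ^ n * μ (ladderEq 1 n) with hG
  have hG1 : G < 1 := tsum_pow_mul_infinitePi_ladderEq_one_lt_one ν (ENNReal.ofReal_lt_one.mpr hu.2)
  have hGtop : G ≠ ∞ := hG1.ne_top
  have hF1 : G.toReal < 1 := by
    simpa using (ENNReal.toReal_lt_toReal hGtop ENNReal.one_ne_top).mpr hG1
  have hF0 : 0 ≤ G.toReal := ENNReal.toReal_nonneg
  have hF : ∑' n : ℕ, u ^ (n + 1) * (μ (firstLadderEq (n + 1))).toReal = G.toReal := by
    rw [hG, tsum_pow_mul_ladderEq_one, ENNReal.tsum_toReal_eq fun n => by finiteness]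
    refine tsum_congr fun n => ?_
    simp [ENNReal.toReal_ofReal hu.1.le]
  have hsum : ∑' n : ℕ, ENNReal.ofReal u ^ (n + 1) / (n + 1) * μ {y | partialSum y (n + 1) ≤ 0}
      = ENNReal.ofReal (-Real.log (1 - G.toReal)) := by
    rw [tsum_pow_div_mul_infinitePi_partialSum_nonpos, ← hG,
      ← tsum_ofReal_pow_div_eq_neg_log hF0 hF1, ENNReal.ofReal_toReal hGtop]
  have hS : ∑' n : ℕ, u ^ (n + 1) / (n + 1) * (μ {y | partialSum y (n + 1) ≤ 0}).toReal
      = -Real.log (1 - G.toReal) := by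
    rw [← ENNReal.toReal_ofReal (neg_nonneg.mpr (Real.log_nonpos (by linarith) (by linarith))),
      ← hsum, ENNReal.tsum_toReal_eq fun n => by finiteness]
    refine tsum_congr fun n => ?_
    have hn : ((n : ℝ≥0∞) + 1).toReal = n + 1 := by exact_mod_cast ENNReal.toReal_natCast (n + 1)
    simp [ENNReal.toReal_ofReal hu.1.le, hn]
  rw [hF, hS, neg_neg, Real.exp_log (by linarith)]

end IID

/-- Sparre Andersen / Spitzer identity for `τ_0`: for a random walk with
i.i.d. real increments and every `u ∈ (0,1)`:
`1 - E[u^{τ_0}] = exp(-∑_{n=1}^∞ (u^n/n)·P(S(n) ≤ 0))`, where `u^{τ_0} := 0` on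
`{τ_0 = ∞}`, so `E[u^{τ_0}] = ∑_{n≥1} u^n P(τ_0 = n)`. -/
theorem spitzer_tau0
    [MeasurableSpace Ω] (P : Measure Ω) [IsProbabilityMeasure P]
    (X : ℕ → Ω → ℝ)
    (hmeas : ∀ k, Measurable (X k))
    (hindep : iIndepFun X P)
    (hident : ∀ k, IdentDistrib (X k) (X 0) P P)
    (u : ℝ) (hu : u ∈ Set.Ioo (0:ℝ) 1) :
    1 - ∑' n : ℕ, u ^ (n + 1) * (P (tau0Eq X (n + 1))).toReal
      = Real.exp (-∑' n : ℕ, u ^ (n + 1) / (n + 1) * (P {ω | S X (n + 1) ω ≤ 0}).toReal) := by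
  have : IsProbabilityMeasure (P.map (X 0)) :=
    Measure.isProbabilityMeasure_map (hmeas 0).aemeasurable
  have hpath : Measurable fun ω i => X i ω := measurable_pi_lambda _ hmeas
  have hlaw : P.map (fun ω i => X i ω) = Measure.infinitePi fun _ => P.map (X 0) := by
    rw [hindep.map_fun_eq_infinitePi_map hmeas]
    exact congrArg _ (funext fun k => (hident k).map_eq)
  have hP : ∀ A, MeasurableSet A →
      P ((fun ω i => X i ω) ⁻¹' A) = Measure.infinitePi (fun _ => P.map (X 0)) A :=
    fun A hA => by rw [← hlaw, Measure.map_apply hpath hA]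
  have htau : ∀ n, P (tau0Eq X n) = Measure.infinitePi (fun _ => P.map (X 0)) (firstLadderEq n) :=
    fun n => hP _ (measurableSet_firstLadderEq n)
  have hS : ∀ n, P {ω | S X n ω ≤ 0}
      = Measure.infinitePi (fun _ => P.map (X 0)) {y | partialSum y n ≤ 0} :=
    fun n => hP _ (measurableSet_le (measurable_partialSum n) measurable_const)
  simp_rw [htau, hS]
  exact spitzer_infinitePi _ hu

end Stmt14
end

section
/- Let S(n)=X_1+⋯+X_n be a random walk with independent real-valued increments, let g:ℕ→ℝ be any boundary sequence, and let T_g = inf{n≥1 : S(n) ≤ g(n)}. Then for every n≥1 and every x∈ℝ: P(S(n)>x, T_g>n) ≥ P(S(n)>x)·P(T_g>n). -/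
/-!
Lay the first `n` increments out as a random vector in `ℝⁿ`. By independence its law is the
product of the marginal laws, and both events are preimages of upper sets of `ℝⁿ`, since
partial sums are monotone in the increments. The claim is therefore the Harris inequality for
product measures: upper sets are positively correlated. That inequality follows by induction
on the number of factors, the step being Chebyshev's integral inequality for the monotone
section measures `y ↦ ν {b | (y, b) ∈ A}`.
-/

open MeasureTheory ProbabilityTheory Filter
open scoped ENNReal

namespace Stmt17

variable {Ω : Type*}

/-- Partial sums of the increments: `S n = X 0 + ⋯ + X (n-1)`. -/
def S (X : ℕ → Ω → ℝ) (n : ℕ) (ω : Ω) : ℝ := ∑ k ∈ Finset.range n, X k ω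

/-- The event `T_g > n`, i.e. `S k > g k` for all `1 ≤ k ≤ n`. -/
def TgGt (X : ℕ → Ω → ℝ) (g : ℕ → ℝ) (n : ℕ) : Set Ω :=
  {ω | ∀ k, 1 ≤ k → k ≤ n → g k < S X k ω}

end Stmt17

theorem mul_add_mul_le_mul_add_mul_of_canonicallyOrderedAdd {R : Type*} [CommSemiring R]
    [PartialOrder R] [CanonicallyOrderedAdd R] {a b c d : R} (hab : a ≤ b) (hcd : c ≤ d) :
    a * d + b * c ≤ a * c + b * d := by
  obtain ⟨k, rfl⟩ := exists_add_of_le hab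
  obtain ⟨e, rfl⟩ := exists_add_of_le hcd
  calc a * (c + e) + (a + k) * c ≤ a * (c + e) + (a + k) * c + k * e := le_self_add
    _ = a * c + (a + k) * (c + e) := by ring

theorem Monovary.mul_add_mul_le_mul_add_mul_of_canonicallyOrderedAdd {α R : Type*}
    [CommSemiring R] [LinearOrder R] [CanonicallyOrderedAdd R] {f g : α → R}
    (hfg : Monovary f g) (a b : α) :
    f a * g b + f b * g a ≤ f a * g a + f b * g b := by
  rcases lt_trichotomy (g a) (g b) with hlt | heq | hgt
  · exact _root_.mul_add_mul_le_mul_add_mul_of_canonicallyOrderedAdd (hfg hlt) hlt.le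
  · rw [heq]
  · rw [add_comm, add_comm (f a * g a)]
    exact _root_.mul_add_mul_le_mul_add_mul_of_canonicallyOrderedAdd (hfg hgt) hgt.le

theorem Monovary.lintegral_mul_lintegral_le {α : Type*} [MeasurableSpace α] {μ : Measure α}
    [IsProbabilityMeasure μ] {f g : α → ℝ≥0∞} (hfg : Monovary f g) (hf : Measurable f)
    (hg : Measurable g) :
    (∫⁻ a, f a ∂μ) * ∫⁻ a, g a ∂μ ≤ ∫⁻ a, f a * g a ∂μ := by
  set F := ∫⁻ a, f a ∂μ
  set G := ∫⁻ a, g a ∂μ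
  set I := ∫⁻ a, f a * g a ∂μ
  have hcross : ∫⁻ a, ∫⁻ b, (f a * g b + f b * g a) ∂μ ∂μ = 2 * (F * G) := by
    simp_rw [lintegral_add_left (hg.const_mul _), lintegral_const_mul _ hg,
      lintegral_mul_const _ hf]
    rw [lintegral_add_left (hf.mul_const _), lintegral_mul_const _ hf, lintegral_const_mul _ hg,
      two_mul]
  have hdiag : ∫⁻ a, ∫⁻ b, (f a * g a + f b * g b) ∂μ ∂μ = 2 * I := by
    simp_rw [lintegral_add_left measurable_const, lintegral_const, measure_univ, mul_one]
    rw [lintegral_add_right _ measurable_const, lintegral_const, measure_univ, mul_one, two_mul]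
  have h2 : 2 * (F * G) ≤ 2 * I := by
    rw [← hcross, ← hdiag]
    exact lintegral_mono fun a => lintegral_mono fun b =>
      hfg.mul_add_mul_le_mul_add_mul_of_canonicallyOrderedAdd a b
  exact (ENNReal.mul_le_mul_iff_right two_ne_zero (ENNReal.ofNat_ne_top (n := 2))).mp h2

def HasHarrisInequality {β : Type*} [MeasurableSpace β] [Preorder β] (μ : Measure β) : Prop :=
  ∀ ⦃A B : Set β⦄, MeasurableSet A → MeasurableSet B → IsUpperSet A → IsUpperSet B →
    μ A * μ B ≤ μ (A ∩ B)

section HarrisInequality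

variable {α β γ : Type*} [MeasurableSpace α] [MeasurableSpace β] [MeasurableSpace γ]

theorem hasHarrisInequality_of_subsingleton [Preorder β] [Subsingleton β] (μ : Measure β)
    [IsProbabilityMeasure μ] : HasHarrisInequality μ := by
  intro A B _ _ _ _
  rcases A.eq_empty_or_nonempty with rfl | hA
  · simp
  rcases B.eq_empty_or_nonempty with rfl | hB
  · simp
  simp [hA.eq_univ, hB.eq_univ]

theorem HasHarrisInequality.map [Preorder β] [Preorder γ] {μ : Measure β}
    (hμ : HasHarrisInequality μ) {f : β → γ} (hf : Measurable f) (hmono : Monotone f) :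
    HasHarrisInequality (μ.map f) := by
  intro A B hA hB hAu hBu
  rw [Measure.map_apply hf hA, Measure.map_apply hf hB, Measure.map_apply hf (hA.inter hB)]
  exact hμ (hf hA) (hf hB) (hAu.preimage hmono) (hBu.preimage hmono)

theorem HasHarrisInequality.prod [LinearOrder α] [Preorder β] (μ : Measure α)
    [IsProbabilityMeasure μ] {ν : Measure β} [SFinite ν] (hν : HasHarrisInequality ν) :
    HasHarrisInequality (μ.prod ν) := by
  intro A B hA hB hAu hBu
  have hsection_mono {C : Set (α × β)} (hC : IsUpperSet C) :
      Monotone fun y => ν (Prod.mk y ⁻¹' C) := fun y y' h =>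
    measure_mono fun b hb => hC (Prod.mk_le_mk.mpr ⟨h, le_rfl⟩) hb
  have hsection_upper {C : Set (α × β)} (hC : IsUpperSet C) (y : α) :
      IsUpperSet (Prod.mk y ⁻¹' C) := fun b b' h hb =>
    hC (Prod.mk_le_mk.mpr ⟨le_rfl, h⟩) hb
  rw [Measure.prod_apply hA, Measure.prod_apply hB, Measure.prod_apply (hA.inter hB)]
  calc (∫⁻ y, ν (Prod.mk y ⁻¹' A) ∂μ) * ∫⁻ y, ν (Prod.mk y ⁻¹' B) ∂μ
      ≤ ∫⁻ y, ν (Prod.mk y ⁻¹' A) * ν (Prod.mk y ⁻¹' B) ∂μ :=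
        ((hsection_mono hAu).monovary (hsection_mono hBu)).lintegral_mul_lintegral_le
          (measurable_measure_prodMk_left hA) (measurable_measure_prodMk_left hB)
    _ ≤ ∫⁻ y, ν (Prod.mk y ⁻¹' (A ∩ B)) ∂μ := lintegral_mono fun y =>
        hν (measurable_prodMk_left hA) (measurable_prodMk_left hB) (hsection_upper hAu y)
          (hsection_upper hBu y)

theorem hasHarrisInequality_pi [LinearOrder α] :
    ∀ {n : ℕ} (μ : Fin n → Measure α) [∀ i, IsProbabilityMeasure (μ i)],
      HasHarrisInequality (Measure.pi μ)
  | 0, μ, _ => hasHarrisInequality_of_subsingleton _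
  | n + 1, μ, _ => by
    let e := MeasurableEquiv.piFinSuccAbove (fun _ : Fin (n + 1) => α) 0
    have he : Monotone e.symm := by
      rintro ⟨a, p⟩ ⟨b, q⟩ h
      simpa [e, MeasurableEquiv.piFinSuccAbove, Fin.consEquiv, Fin.cons_le_cons] using h
    rw [← ((measurePreserving_piFinSuccAbove μ 0).symm e).map_eq]
    exact ((hasHarrisInequality_pi _).prod (μ 0)).map e.symm.measurable he

end HarrisInequality

theorem ProbabilityTheory.iIndepFun.measure_preimage_mul_le_of_isUpperSet {Ω α : Type*}
    [MeasurableSpace Ω] [MeasurableSpace α] [LinearOrder α] {P : Measure Ω}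
    [IsProbabilityMeasure P] {n : ℕ} {X : Fin n → Ω → α} (hX : ∀ i, Measurable (X i))
    (hindep : iIndepFun X P) {U V : Set (Fin n → α)} (hU : MeasurableSet U)
    (hV : MeasurableSet V) (hUu : IsUpperSet U) (hVu : IsUpperSet V) :
    P ((fun ω i => X i ω) ⁻¹' U) * P ((fun ω i => X i ω) ⁻¹' V) ≤
      P ((fun ω i => X i ω) ⁻¹' U ∩ (fun ω i => X i ω) ⁻¹' V) := by
  have := fun i => Measure.isProbabilityMeasure_map (μ := P) (hX i).aemeasurable
  have hlaw : HasHarrisInequality (P.map fun ω i => X i ω) := by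
    rw [(iIndepFun_iff_map_fun_eq_pi_map fun i => (hX i).aemeasurable).1 hindep]
    exact hasHarrisInequality_pi _
  have hφ : Measurable fun ω i => X i ω := measurable_pi_lambda _ hX
  have h := hlaw hU hV hUu hVu
  rwa [Measure.map_apply hφ hU, Measure.map_apply hφ hV, Measure.map_apply hφ (hU.inter hV),
    Set.preimage_inter] at h

namespace Stmt17

variable {Ω : Type*}

def finPartialSum {n k : ℕ} (hk : k ≤ n) (v : Fin n → ℝ) : ℝ :=
  ∑ j : Fin k, v (Fin.castLE hk j)

theorem monotone_finPartialSum {n k : ℕ} (hk : k ≤ n) : Monotone (finPartialSum hk) :=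
  fun _ _ h => Finset.sum_le_sum fun _ _ => h _

theorem measurable_finPartialSum {n k : ℕ} (hk : k ≤ n) : Measurable (finPartialSum hk) :=
  Finset.measurable_sum _ fun _ _ => measurable_pi_apply _

@[simp]
theorem finPartialSum_eq_S {n k : ℕ} (hk : k ≤ n) (X : ℕ → Ω → ℝ) (ω : Ω) :
    finPartialSum hk (fun i : Fin n => X i ω) = S X k ω := by
  simp only [finPartialSum, Fin.val_castLE, S]
  exact Fin.sum_univ_eq_sum_range (fun j => X j ω) k

theorem positive_correlation_general
    [MeasurableSpace Ω] (P : Measure Ω) [IsProbabilityMeasure P]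
    (X : ℕ → Ω → ℝ) (g : ℕ → ℝ)
    (hmeas : ∀ k, Measurable (X k))
    (hindep : iIndepFun X P)
    (n : ℕ) (x : ℝ) :
    P {ω | x < S X n ω} * P (TgGt X g n) ≤ P ({ω | x < S X n ω} ∩ TgGt X g n) := by
  let U : Set (Fin n → ℝ) := finPartialSum le_rfl ⁻¹' Set.Ioi x
  let V : Set (Fin n → ℝ) :=
    ⋂ k, ⋂ (_ : 1 ≤ k), ⋂ (hk : k ≤ n), finPartialSum hk ⁻¹' Set.Ioi (g k)
  have hU : {ω | x < S X n ω} = (fun ω (i : Fin n) => X i ω) ⁻¹' U := by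
    ext ω; simp [U]
  have hV : TgGt X g n = (fun ω (i : Fin n) => X i ω) ⁻¹' V := by
    ext ω; simp [V, TgGt]
  rw [hU, hV]
  refine (hindep.precomp Fin.val_injective).measure_preimage_mul_le_of_isUpperSet
    (fun i => hmeas i) (measurableSet_Ioi.preimage (measurable_finPartialSum le_rfl))
    (.iInter fun k => .iInter fun _ => .iInter fun hk =>
      measurableSet_Ioi.preimage (measurable_finPartialSum hk))
    ((isUpperSet_Ioi x).preimage (monotone_finPartialSum le_rfl))
    (isUpperSet_iInter fun k => isUpperSet_iInter fun _ => isUpperSet_iInter fun hk =>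
      (isUpperSet_Ioi (g k)).preimage (monotone_finPartialSum hk))

/-- for a random walk with independent (not necessarily identically
distributed) increments, any boundary `g`, every `n ≥ 1` and every `x ∈ ℝ`:
`P(S(n) > x, T_g > n) ≥ P(S(n) > x) · P(T_g > n)`. -/
theorem positive_correlation
    [MeasurableSpace Ω] (P : Measure Ω) [IsProbabilityMeasure P]
    (X : ℕ → Ω → ℝ) (g : ℕ → ℝ)
    (hmeas : ∀ k, Measurable (X k))
    (hindep : iIndepFun X P)
    (n : ℕ) (hn : 1 ≤ n) (x : ℝ) :
    P {ω | x < S X n ω} * P (TgGt X g n) ≤ P ({ω | x < S X n ω} ∩ TgGt X g n) :=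
  positive_correlation_general P X g hmeas hindep n x

end Stmt17
end
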